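/- arXiv:1712.00107 — 9 statements merged into one kernel-verified Lean document; each statement's English description precedes it below -/
import Mathlib

section
/- Let λ₁,…,λ_r be positive integers with ∑λᵢ = n, and let ν be the partition conjugate to the rearrangement of (λ₁,…,λ_r) in decreasing order, with s parts. Then ∑_{1≤i<j≤s}(νᵢ − νⱼ) + (n−s)·∑_{i=1}^s νᵢ = n² − ∑_{i=1}^r λᵢ². -/
open Finset

/-! The conjugate partition counts cells column by column: with `ν i = #{j | i < λ j}`, a weighted
column sum `∑ i, f i * ν i` over the Young diagram equals the row sum `∑ j, ∑ i < λ j, f i`.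
The pair sum `∑_{i<j} (ν i - ν j)` is the column sum with weights `s - 1 - 2 i`, whose row sums are
`λ j * (s - λ j)`, and `∑ ν i = n`; hence the left side is `s n - ∑ λ j ^ 2 + (n - s) n`. -/

theorem sum_filter_fst_lt_eq_sum_card_Ioi_nsmul {α M : Type*} [Fintype α] [Preorder α]
    [LocallyFiniteOrderTop α] [DecidableLT α] [AddCommMonoid M] (f : α → M) :
    ∑ p ∈ univ.filter (fun p : α × α => p.1 < p.2), f p.1 = ∑ i, #(Ioi i) • f i := by
  rw [sum_filter, Fintype.sum_prod_type]
  refine sum_congr rfl fun i _ => ?_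
  dsimp only
  rw [← sum_filter, sum_const, filter_lt_eq_Ioi]

theorem sum_filter_snd_lt_eq_sum_card_Iio_nsmul {α M : Type*} [Fintype α] [Preorder α]
    [LocallyFiniteOrderBot α] [DecidableLT α] [AddCommMonoid M] (f : α → M) :
    ∑ p ∈ univ.filter (fun p : α × α => p.1 < p.2), f p.2 = ∑ j, #(Iio j) • f j := by
  rw [sum_filter, Fintype.sum_prod_type_right]
  refine sum_congr rfl fun j _ => ?_
  dsimp only
  rw [← sum_filter, sum_const, filter_gt_eq_Iio]

theorem Fin.sum_filter_lt_sub_eq_sum_mul {R : Type*} [CommRing R] {s : ℕ} (ν : Fin s → R) :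
    ∑ p ∈ univ.filter (fun p : Fin s × Fin s => p.1 < p.2), (ν p.1 - ν p.2)
      = ∑ i : Fin s, ((s : R) - 1 - 2 * (i : ℕ)) * ν i := by
  rw [sum_sub_distrib, sum_filter_fst_lt_eq_sum_card_Ioi_nsmul,
    sum_filter_snd_lt_eq_sum_card_Iio_nsmul, ← sum_sub_distrib]
  refine sum_congr rfl fun i _ => ?_
  have := i.isLt
  rw [Fin.card_Ioi, Fin.card_Iio, nsmul_eq_mul, nsmul_eq_mul, Nat.cast_sub (by omega),
    Nat.cast_sub (by omega)]
  push_cast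
  ring

theorem sum_range_card_filter_lt_nsmul {ι M : Type*} [Fintype ι] [AddCommMonoid M]
    {a : ι → ℕ} {s : ℕ} (ha : ∀ j, a j ≤ s) (f : ℕ → M) :
    ∑ i ∈ range s, #{j | i < a j} • f i = ∑ j, ∑ i ∈ range (a j), f i := by
  simp_rw [← sum_const, sum_filter]
  rw [sum_comm]
  refine sum_congr rfl fun j _ => ?_
  rw [← sum_filter]
  congr 1
  ext i; simp only [mem_filter, mem_range]
  have := ha j
  omega

theorem sum_range_sub_one_sub_two_mul {R : Type*} [CommRing R] (S : R) (m : ℕ) :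
    ∑ i ∈ range m, (S - 1 - 2 * i) = m * (S - m) := by
  induction m with
  | zero => simp
  | succ k ih =>
    rw [sum_range_succ, ih]
    push_cast
    ring

theorem length_tau_q_formula_general (n r s : ℕ) (lam : Fin r → ℕ)
    (hsum : ∑ i, lam i = n)
    (hs : s = Finset.univ.sup lam) (ν : Fin s → ℕ)
    (hconj : ∀ i : Fin s,
      ν i = (Finset.univ.filter (fun j : Fin r => (i : ℕ) + 1 ≤ lam j)).card) :
    (∑ p ∈ Finset.univ.filter (fun p : Fin s × Fin s => p.1 < p.2),
        ((ν p.1 : ℤ) - (ν p.2 : ℤ)))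
      + ((n : ℤ) - (s : ℤ)) * (∑ i : Fin s, (ν i : ℤ))
      = (n : ℤ) ^ 2 - ∑ i : Fin r, (lam i : ℤ) ^ 2 := by
  have hle : ∀ j, lam j ≤ s := fun j => hs ▸ le_sup (mem_univ j)
  have hweighted (f : ℕ → ℤ) : ∑ i : Fin s, f i * ν i = ∑ j, ∑ i ∈ range (lam j), f i := by
    simp_rw [hconj, Nat.succ_le_iff, mul_comm (f _), ← nsmul_eq_mul]
    rw [Fin.sum_univ_eq_sum_range (fun i => #{j | i < lam j} • f i)]
    exact sum_range_card_filter_lt_nsmul hle f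
  have hsum' : ∑ j, (lam j : ℤ) = n := by exact_mod_cast hsum
  have htotal : ∑ i : Fin s, (ν i : ℤ) = n := by simpa [hsum'] using hweighted 1
  rw [Fin.sum_filter_lt_sub_eq_sum_mul (fun i => (ν i : ℤ)),
    hweighted (fun i => (s : ℤ) - 1 - 2 * i), htotal]
  simp_rw [sum_range_sub_one_sub_two_mul, mul_sub, sum_sub_distrib, ← sum_mul, hsum', sq]
  ring

/-- for a composition λ of n with conjugate partition ν (of the
decreasing rearrangement of λ, with s = max λᵢ parts),
∑_{i<j≤s}(νᵢ − νⱼ) + (n−s)·∑νᵢ = n² − ∑λᵢ². -/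
theorem length_tau_q_formula (n r s : ℕ) (lam : Fin r → ℕ)
    (hpos : ∀ i, 0 < lam i) (hsum : ∑ i, lam i = n)
    (hs : s = Finset.univ.sup lam) (ν : Fin s → ℕ)
    (hconj : ∀ i : Fin s,
      ν i = (Finset.univ.filter (fun j : Fin r => (i : ℕ) + 1 ≤ lam j)).card) :
    (∑ p ∈ Finset.univ.filter (fun p : Fin s × Fin s => p.1 < p.2),
        ((ν p.1 : ℤ) - (ν p.2 : ℤ)))
      + ((n : ℤ) - (s : ℤ)) * (∑ i : Fin s, (ν i : ℤ))
      = (n : ℤ) ^ 2 - ∑ i : Fin r, (lam i : ℤ) ^ 2 :=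
  length_tau_q_formula_general n r s lam hsum hs ν hconj
end

section
/- Let N and N₁ be n×n nilpotent matrices over a field k such that (1 − t⁻¹N)⁻¹(1 − t⁻¹N₁) lies in SL_n(k[t]) (i.e., has all entries in k[t]). Then N = N₁. -/
/-! Since `N` is nilpotent, `(1 - t⁻¹N)⁻¹ = ∑ₗ t⁻ˡ Nˡ`, and writing
`1 - t⁻¹N₁ = (1 - t⁻¹N) + t⁻¹(N - N₁)` gives
`(1 - t⁻¹N)⁻¹ (1 - t⁻¹N₁) = 1 + ∑ₗ t⁻⁽ˡ⁺¹⁾ Nˡ (N - N₁)`.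
The `t⁻¹`-coefficient of the right-hand side is `N - N₁`, and it vanishes when all entries lie
in `k[t]`. -/

open LaurentPolynomial

namespace LaurentPolynomial

variable {R : Type*}

theorem coeff_toLaurent_of_neg [Semiring R] (p : Polynomial R) {d : ℤ} (hd : d < 0) :
    (Polynomial.toLaurent p).coeff d = 0 := by
  rw [coeff_toLaurent]
  refine Finsupp.mapDomain_of_notMem_range _ _ ?_
  simp only [Set.mem_range, Nat.castEmbedding_apply, not_exists]
  omega

theorem coeff_C_mul_T [Semiring R] (r : R) (a b : ℤ) :
    (C r * T a).coeff b = if a = b then r else 0 := by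
  rw [← single_eq_C_mul_T, AddMonoidAlgebra.coeff_single, Finsupp.single_apply]

theorem coeff_T_smul_map_C_apply [CommSemiring R] {m n : Type*} (M : Matrix m n R) (a b : ℤ)
    (i : m) (j : n) :
    (((T a : R[T;T⁻¹]) • M.map C) i j).coeff b = if a = b then M i j else 0 := by
  rw [Matrix.smul_apply, Matrix.map_apply, smul_eq_mul, T_mul, coeff_C_mul_T]

theorem coeff_one_apply_of_ne_zero [Semiring R] {n : Type*} [DecidableEq n] {d : ℤ} (hd : d ≠ 0)
    (i j : n) : ((1 : Matrix n n R[T;T⁻¹]) i j).coeff d = 0 := by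
  rw [Matrix.one_apply]
  split_ifs
  · rw [← T_zero, T_apply, if_neg hd.symm]
  · rfl

variable {n : Type*} [Fintype n] [DecidableEq n] [CommSemiring R]

theorem T_smul_map_C_pow (a : ℤ) (M : Matrix n n R) (l : ℕ) :
    ((T a : R[T;T⁻¹]) • M.map C) ^ l = (T (l * a) : R[T;T⁻¹]) • (M ^ l).map C := by
  rw [smul_pow, T_pow, ← RingHom.mapMatrix_apply, ← map_pow, RingHom.mapMatrix_apply]

theorem T_smul_map_C_pow_mul (a : ℤ) (A B : Matrix n n R) (l : ℕ) :
    ((T a : R[T;T⁻¹]) • A.map C) ^ l * ((T a : R[T;T⁻¹]) • B.map C) =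
      (T ((l + 1) * a) : R[T;T⁻¹]) • (A ^ l * B).map C := by
  rw [T_smul_map_C_pow, smul_mul_smul_comm, ← T_add, ← Matrix.map_mul]
  congr 2
  ring

end LaurentPolynomial

namespace Matrix

open Finset

variable {n R : Type*} [Fintype n] [DecidableEq n] [CommRing R]

theorem inv_one_sub_eq_geom_sum {x : Matrix n n R} {m : ℕ} (hx : x ^ m = 0) :
    (1 - x)⁻¹ = ∑ l ∈ range m, x ^ l :=
  inv_eq_right_inv (by rw [mul_neg_geom_sum, hx, sub_zero])

theorem inv_one_sub_mul_one_sub {x : Matrix n n R} {m : ℕ} (hx : x ^ m = 0)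
    (y : Matrix n n R) : (1 - x)⁻¹ * (1 - y) = 1 + ∑ l ∈ range m, x ^ l * (x - y) := by
  rw [inv_one_sub_eq_geom_sum hx, ← sum_mul]
  calc (∑ l ∈ range m, x ^ l) * (1 - y)
      = (∑ l ∈ range m, x ^ l) * (1 - x) + (∑ l ∈ range m, x ^ l) * (x - y) := by
        rw [← mul_add, sub_add_sub_cancel]
    _ = 1 + (∑ l ∈ range m, x ^ l) * (x - y) := by rw [geom_sum_mul_neg, hx, sub_zero]

end Matrix

theorem lusztig_embedding_injective_general (k : Type*) [Field k] (n : ℕ)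
    (N N₁ : Matrix (Fin n) (Fin n) k) (hN : IsNilpotent N)
    (h : ∀ i j : Fin n, ∃ p : Polynomial k,
      Polynomial.toLaurent p =
        ((((1 : Matrix (Fin n) (Fin n) (LaurentPolynomial k))
              - (T (-1) : LaurentPolynomial k) • N.map (LaurentPolynomial.C))⁻¹)
          * ((1 : Matrix (Fin n) (Fin n) (LaurentPolynomial k))
              - (T (-1) : LaurentPolynomial k) • N₁.map (LaurentPolynomial.C))) i j) :
    N = N₁ := by
  obtain ⟨m, hm⟩ := hN
  -- exponent `m + 1` so that the geometric sum always contains its `l = 0` term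
  have hx : ((T (-1) : LaurentPolynomial k) • N.map C) ^ (m + 1) = 0 := by
    rw [T_smul_map_C_pow, pow_succ, hm, zero_mul, Matrix.map_zero _ (map_zero C), smul_zero]
  ext i j
  obtain ⟨p, hp⟩ := h i j
  have hcoeff := congrArg (fun q => q.coeff (-1)) hp
  rw [coeff_toLaurent_of_neg p (by norm_num), Matrix.inv_one_sub_mul_one_sub hx, ← smul_sub,
    ← Matrix.map_sub _ (map_sub C)] at hcoeff
  simp only [T_smul_map_C_pow_mul, Matrix.add_apply, AddMonoidAlgebra.coeff_add, Finsupp.add_apply,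
    coeff_one_apply_of_ne_zero (show (-1 : ℤ) ≠ 0 by norm_num), Matrix.sum_apply,
    AddMonoidAlgebra.coeff_sum, Finsupp.finsetSum_apply, coeff_T_smul_map_C_apply] at hcoeff
  simpa [sub_eq_zero, eq_comm] using hcoeff

/-- if N, N₁ are nilpotent n×n matrices over a field k and the matrix
(1 − t⁻¹N)⁻¹(1 − t⁻¹N₁) over k[t,t⁻¹] has all entries in k[t], then N = N₁.
(Injectivity of Lusztig's embedding.) -/
theorem lusztig_embedding_injective (k : Type*) [Field k] (n : ℕ)
    (N N₁ : Matrix (Fin n) (Fin n) k) (hN : IsNilpotent N) (hN₁ : IsNilpotent N₁)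
    (h : ∀ i j : Fin n, ∃ p : Polynomial k,
      Polynomial.toLaurent p =
        ((((1 : Matrix (Fin n) (Fin n) (LaurentPolynomial k))
              - (T (-1) : LaurentPolynomial k) • N.map (LaurentPolynomial.C))⁻¹)
          * ((1 : Matrix (Fin n) (Fin n) (LaurentPolynomial k))
              - (T (-1) : LaurentPolynomial k) • N₁.map (LaurentPolynomial.C))) i j) :
    N = N₁ :=
  lusztig_embedding_injective_general k n N N₁ hN h
end

section
/- Let G = SL_n(k), P ⊆ G a parabolic subgroup with Lie algebra of unipotent radical 𝔲, and let g, g₁ ∈ G, Y, Y₁ ∈ 𝔲 (so Y, Y₁ are nilpotent). If g(1 − t⁻¹Y) = g₁(1 − t⁻¹Y₁)·x for some x ∈ SL_n(k[t]) with x mod t lying in P, then h := g₁⁻¹g lies in P and Y₁ = hYh⁻¹. -/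
open LaurentPolynomial

/-- injectivity of φ_P.  Let the parabolic subgroup P of SL_n(k) be the
block upper triangular matrices for the block structure given by a monotone function
`blk : Fin n → ℕ`, and let 𝔲 (strictly block upper triangular matrices) be the Lie
algebra of its unipotent radical.  If g, g₁ ∈ SL_n(k), Y, Y₁ ∈ 𝔲 and
g(1 − t⁻¹Y) = g₁(1 − t⁻¹Y₁)·x for some x ∈ SL_n(k[t]) whose value at t = 0 lies in P,
then h := g₁⁻¹g lies in P and Y₁ = hYh⁻¹. -/
theorem phiP_injective (k : Type*) [Field k] (n : ℕ)
    (blk : Fin n → ℕ) (hblk : Monotone blk)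
    (g g₁ : Matrix (Fin n) (Fin n) k) (hg : g.det = 1) (hg₁ : g₁.det = 1)
    (Y Y₁ : Matrix (Fin n) (Fin n) k)
    (hY : ∀ i j : Fin n, ¬ blk i < blk j → Y i j = 0)
    (hY₁ : ∀ i j : Fin n, ¬ blk i < blk j → Y₁ i j = 0)
    (x : Matrix (Fin n) (Fin n) (Polynomial k)) (hx : x.det = 1)
    (hx0 : ∀ i j : Fin n, blk j < blk i → (x i j).eval 0 = 0)
    (heq : (g.map (LaurentPolynomial.C))
        * ((1 : Matrix (Fin n) (Fin n) (LaurentPolynomial k))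
            - (T (-1) : LaurentPolynomial k) • Y.map (LaurentPolynomial.C))
      = (g₁.map (LaurentPolynomial.C))
        * ((1 : Matrix (Fin n) (Fin n) (LaurentPolynomial k))
            - (T (-1) : LaurentPolynomial k) • Y₁.map (LaurentPolynomial.C))
        * x.map (Polynomial.toLaurent)) :
    (∀ i j : Fin n, blk j < blk i → (g₁⁻¹ * g) i j = 0) ∧
      Y₁ = (g₁⁻¹ * g) * Y * (g₁⁻¹ * g)⁻¹ := by
  classical
  set H : Matrix (Fin n) (Fin n) k := g₁⁻¹ * g with hHdef
  have hg₁u : IsUnit g₁.det := by rw [hg₁]; exact isUnit_one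
  -- Step 0: a scalar multiplication identity over Laurent polynomials
  have E1 : ∀ Z : Matrix (Fin n) (Fin n) k,
      ((1 : Matrix (Fin n) (Fin n) (LaurentPolynomial k))
          - (T (-1) : LaurentPolynomial k) • Z.map LaurentPolynomial.C)
        * ((T 1 : LaurentPolynomial k) • 1)
      = (T 1 : LaurentPolynomial k) • 1 - Z.map LaurentPolynomial.C := by
    intro Z
    rw [Matrix.sub_mul, Matrix.one_mul, Matrix.smul_mul, Matrix.mul_smul, smul_smul,
      ← T_add]
    norm_num
  -- Step 1: the original equation, rewritten with `T 1 • 1 - ⬝`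
  have key : g.map LaurentPolynomial.C
        * ((T 1 : LaurentPolynomial k) • 1 - Y.map LaurentPolynomial.C)
      = g₁.map LaurentPolynomial.C
        * ((T 1 : LaurentPolynomial k) • 1 - Y₁.map LaurentPolynomial.C)
        * x.map Polynomial.toLaurent := by
    calc g.map LaurentPolynomial.C
        * ((T 1 : LaurentPolynomial k) • 1 - Y.map LaurentPolynomial.C)
        = g.map LaurentPolynomial.C
          * ((1 - (T (-1) : LaurentPolynomial k) • Y.map LaurentPolynomial.C)
            * ((T 1 : LaurentPolynomial k) • 1)) := by rw [E1]
      _ = (g.map LaurentPolynomial.C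
          * (1 - (T (-1) : LaurentPolynomial k) • Y.map LaurentPolynomial.C))
            * ((T 1 : LaurentPolynomial k) • 1) := by rw [Matrix.mul_assoc]
      _ = (g₁.map LaurentPolynomial.C
          * (1 - (T (-1) : LaurentPolynomial k) • Y₁.map LaurentPolynomial.C)
          * x.map Polynomial.toLaurent) * ((T 1 : LaurentPolynomial k) • 1) := by rw [heq]
      _ = g₁.map LaurentPolynomial.C
          * ((1 - (T (-1) : LaurentPolynomial k) • Y₁.map LaurentPolynomial.C)
            * ((T 1 : LaurentPolynomial k) • 1)) * x.map Polynomial.toLaurent := by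
            rw [Matrix.mul_assoc, Matrix.mul_assoc, Matrix.mul_assoc]
            congr 1
            rw [Matrix.mul_smul, Matrix.mul_one, Matrix.mul_assoc, Matrix.smul_mul,
              Matrix.one_mul, Matrix.mul_smul]
      _ = _ := by rw [E1]
  -- Step 2: descend to polynomial matrices
  have hpoly : g.map Polynomial.C
        * ((Polynomial.X : Polynomial k) • (1 : Matrix (Fin n) (Fin n) (Polynomial k)) - Y.map Polynomial.C)
      = g₁.map Polynomial.C
        * ((Polynomial.X : Polynomial k) • (1 : Matrix (Fin n) (Fin n) (Polynomial k)) - Y₁.map Polynomial.C)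
        * x := by
    apply Matrix.map_injective Polynomial.toLaurent_injective
    dsimp only
    have hmapC : ∀ A : Matrix (Fin n) (Fin n) k,
        (A.map Polynomial.C).map (Polynomial.toLaurent (R := k))
          = A.map LaurentPolynomial.C := by
      intro A; ext i j; simp [Matrix.map_apply, Polynomial.toLaurent_C]
    have hmapS : ∀ Z : Matrix (Fin n) (Fin n) k,
        (((Polynomial.X : Polynomial k) • (1 : Matrix (Fin n) (Fin n) (Polynomial k))
            - Z.map Polynomial.C)).map (Polynomial.toLaurent (R := k))
          = (T 1 : LaurentPolynomial k) • 1 - Z.map LaurentPolynomial.C := by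
      intro Z; ext i j
      simp only [Matrix.map_apply, Matrix.sub_apply, Matrix.smul_apply, Matrix.one_apply,
        smul_eq_mul, map_sub, map_mul, Polynomial.toLaurent_C, Polynomial.toLaurent_X]
      by_cases h : i = j <;> simp [h]
    rw [Matrix.map_mul (f := Polynomial.toLaurent), Matrix.map_mul (f := Polynomial.toLaurent),
      Matrix.map_mul (f := Polynomial.toLaurent), hmapC, hmapC, hmapS, hmapS, key]
  -- Step 3: cancel g₁ on the left
  have hgfac : g = g₁ * H := by
    rw [hHdef, ← Matrix.mul_assoc, Matrix.mul_nonsing_inv g₁ hg₁u, Matrix.one_mul]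
  have hdetg₁C : IsUnit (g₁.map (Polynomial.C (R := k))).det := by
    rw [← RingHom.mapMatrix_apply, ← RingHom.map_det, hg₁, map_one]; exact isUnit_one
  have F : H.map Polynomial.C
        * ((Polynomial.X : Polynomial k) • (1 : Matrix (Fin n) (Fin n) (Polynomial k)) - Y.map Polynomial.C)
      = ((Polynomial.X : Polynomial k) • (1 : Matrix (Fin n) (Fin n) (Polynomial k)) - Y₁.map Polynomial.C)
        * x := by
    have h2 : g₁.map Polynomial.C * (H.map Polynomial.C
          * ((Polynomial.X : Polynomial k) • (1 : Matrix (Fin n) (Fin n) (Polynomial k)) - Y.map Polynomial.C))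
        = g₁.map Polynomial.C
          * (((Polynomial.X : Polynomial k) • (1 : Matrix (Fin n) (Fin n) (Polynomial k)) - Y₁.map Polynomial.C)
            * x) := by
      rw [← Matrix.mul_assoc, ← Matrix.map_mul (f := Polynomial.C), ← hgfac, hpoly,
        Matrix.mul_assoc]
    calc H.map Polynomial.C
          * ((Polynomial.X : Polynomial k) • (1 : Matrix (Fin n) (Fin n) (Polynomial k)) - Y.map Polynomial.C)
        = (g₁.map Polynomial.C)⁻¹ * (g₁.map Polynomial.C * (H.map Polynomial.C
            * ((Polynomial.X : Polynomial k) • (1 : Matrix (Fin n) (Fin n) (Polynomial k))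
              - Y.map Polynomial.C))) := by
          rw [Matrix.nonsing_inv_mul_cancel_left _ _ hdetg₁C]
      _ = (g₁.map Polynomial.C)⁻¹ * (g₁.map Polynomial.C
            * (((Polynomial.X : Polynomial k) • (1 : Matrix (Fin n) (Fin n) (Polynomial k))
              - Y₁.map Polynomial.C) * x)) := by rw [h2]
      _ = _ := Matrix.nonsing_inv_mul_cancel_left _ _ hdetg₁C
  -- coefficient matrices of x
  set xc : ℕ → Matrix (Fin n) (Fin n) k := fun d => x.map (fun p => p.coeff d) with hxc
  -- entries of both sides of F
  have Fentry : ∀ i j, Polynomial.C (H i j) * Polynomial.X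
        - ∑ l, Polynomial.C (H i l) * Polynomial.C (Y l j)
      = Polynomial.X * x i j - ∑ l, Polynomial.C (Y₁ i l) * x l j := by
    intro i j
    have h3 := congrFun (congrFun F i) j
    simp only [Matrix.mul_apply, Matrix.sub_apply, Matrix.smul_apply, Matrix.map_apply,
      Matrix.one_apply, smul_eq_mul, sub_mul, mul_sub, ite_mul, mul_ite, one_mul, mul_one,
      zero_mul, mul_zero, Finset.sum_sub_distrib, Finset.sum_ite_eq, Finset.sum_ite_eq',
      Finset.mem_univ, if_true] at h3
    exact h3
  -- coefficient equations
  have h0 : H * Y = Y₁ * xc 0 := by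
    ext i j
    have h4 := congrArg (fun p => Polynomial.coeff p 0) (Fentry i j)
    simp only [Polynomial.coeff_sub, Polynomial.mul_coeff_zero, Polynomial.coeff_X_zero,
      mul_zero, zero_mul, Polynomial.coeff_C_zero, Polynomial.finset_sum_coeff,
      Polynomial.coeff_C_mul, zero_sub, neg_inj] at h4
    simpa [Matrix.mul_apply, hxc, Matrix.map_apply] using h4
  have hsucc : ∀ d : ℕ, (if d = 0 then H else 0) = xc d - Y₁ * xc (d + 1) := by
    intro d
    ext i j
    have h4 := congrArg (fun p => Polynomial.coeff p (d + 1)) (Fentry i j)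
    simp only [Polynomial.coeff_sub, Polynomial.coeff_mul_X, Polynomial.coeff_X_mul,
      Polynomial.coeff_C, Polynomial.finset_sum_coeff, Polynomial.coeff_C_mul,
      Nat.succ_ne_zero, if_false, mul_zero, Finset.sum_const_zero, sub_zero] at h4
    by_cases hd : d = 0
    · subst hd
      rw [if_pos rfl] at h4 ⊢
      simpa [Matrix.sub_apply, Matrix.mul_apply, hxc, Matrix.map_apply] using h4
    · rw [if_neg hd] at h4 ⊢
      simpa [Matrix.sub_apply, Matrix.mul_apply, hxc, Matrix.map_apply] using h4
  -- the positive coefficients of x vanish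
  obtain ⟨N, hN⟩ : ∃ N : ℕ, ∀ d, N ≤ d → xc d = 0 := by
    refine ⟨(Finset.univ.sup fun i : Fin n => Finset.univ.sup
      fun j : Fin n => (x i j).natDegree) + 1, fun d hd => ?_⟩
    ext i j
    simp only [hxc, Matrix.map_apply, Matrix.zero_apply]
    apply Polynomial.coeff_eq_zero_of_natDegree_lt
    have hb1 : (x i j).natDegree ≤ Finset.univ.sup fun j : Fin n => (x i j).natDegree :=
      Finset.le_sup (f := fun j : Fin n => (x i j).natDegree) (Finset.mem_univ j)
    have hb2 : (Finset.univ.sup fun j : Fin n => (x i j).natDegree)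
        ≤ Finset.univ.sup fun i : Fin n => Finset.univ.sup
            fun j : Fin n => (x i j).natDegree :=
      Finset.le_sup (f := fun i : Fin n => Finset.univ.sup
        fun j : Fin n => (x i j).natDegree) (Finset.mem_univ i)
    omega
  have hpos : ∀ d : ℕ, 1 ≤ d → xc d = 0 := by
    intro d hd
    have hstep : ∀ m : ℕ, xc d = Y₁ ^ m * xc (d + m) := by
      intro m
      induction m with
      | zero => simp
      | succ m ih =>
        have h5 := hsucc (d + m)
        rw [if_neg (by omega)] at h5
        have h6 : xc (d + m) = Y₁ * xc (d + m + 1) := by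
          have h7 := h5.symm
          rw [sub_eq_zero] at h7
          exact h7
        rw [show d + (m + 1) = d + m + 1 from by omega, ih, h6, ← Matrix.mul_assoc, ← pow_succ]
    rw [hstep N, hN (d + N) (by omega), Matrix.mul_zero]
  -- H is the constant term of x
  have hH0 : H = xc 0 := by
    have h5 := hsucc 0
    rw [if_pos rfl, hpos 1 le_rfl, Matrix.mul_zero, sub_zero] at h5
    exact h5
  have hdetH : IsUnit H.det := by
    rw [hHdef, Matrix.det_mul, Matrix.det_nonsing_inv, hg₁, hg]
    simp
  constructor
  · intro i j hij
    rw [hH0]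
    simp only [hxc, Matrix.map_apply]
    rw [Polynomial.coeff_zero_eq_eval_zero]
    exact hx0 i j hij
  · have h7 : H * Y = Y₁ * H := by rw [h0, hH0]
    rw [h7, Matrix.mul_assoc, Matrix.mul_nonsing_inv _ hdetH, Matrix.mul_one]
end

section
/- Let w be an element of the affine Weyl group of type Â_{n−1}, regarded as an affine permutation matrix ∑ t^{cᵢ} E_{σ(i),i} with σ ∈ S_n and ∑cᵢ = 0. Then the Coxeter length of w equals ∑_{1≤i<j≤n} |cᵢ − cⱼ − f_σ(i,j)|, where f_σ(i,j) = 0 if σ(i) < σ(j) and 1 otherwise. -/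
/-!
Every inversion `(i, j)` of `w` is `(a + 1, b + 1 + k n)` for unique `a b : Fin n` and `k : ℤ`.
For fixed `(a, b)` the admissible `k` form an interval: `i < j` means `k ≥ [a ≥ b]`, and by
periodicity `w j < w i` means `k < c b - c a + [σ b < σ a]`. For `a < b` the lengths of the
intervals of `(a, b)` and `(b, a)` are the negative and positive parts of
`c a - c b - f_σ(a, b)`, so together the two pairs contribute its absolute value.
-/

open Finset

/-- The Coxeter length of an affine permutation `w : ℤ → ℤ` of type Â_{n−1}:
the number of pairs (i, j) with 1 ≤ i ≤ n, i < j and w(i) > w(j). -/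
noncomputable def affLength (n : ℕ) (w : ℤ → ℤ) : ℕ :=
  Nat.card {p : ℤ × ℤ // 1 ≤ p.1 ∧ p.1 ≤ (n : ℤ) ∧ p.1 < p.2 ∧ w p.2 < w p.1}

theorem Fin.mul_lt_val_sub_val_iff {n : ℕ} (x y : Fin n) (m : ℤ) :
    m * n < (x : ℤ) - y ↔ m < if y < x then 1 else 0 := by
  have hx : (x : ℤ) < n := by exact_mod_cast x.isLt
  have hy : (y : ℤ) < n := by exact_mod_cast y.isLt
  split_ifs with h
  · have h' : (y : ℤ) < x := by exact_mod_cast h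
    constructor <;> intro hm <;> nlinarith
  · have h' : (x : ℤ) ≤ y := by exact_mod_cast not_lt.mp h
    constructor <;> intro hm <;> nlinarith

theorem Fin.val_lt_val_add_mul_iff {n : ℕ} (a b : Fin n) (k : ℤ) :
    (a : ℤ) < b + k * n ↔ (if a < b then 0 else 1) ≤ k := by
  have h := Fin.mul_lt_val_sub_val_iff b a (-k)
  constructor
  · intro hk
    have := h.mp (by linarith)
    split_ifs at this ⊢ <;> omega
  · intro hk
    have := h.mpr (by split_ifs at hk ⊢ <;> omega)
    linarith

theorem affLength_eq_sum_toNat {n : ℕ} [NeZero n] {w : ℤ → ℤ} (K : Fin n × Fin n → ℤ)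
    (hK : ∀ (a b : Fin n) (k : ℤ), w (b + 1 + k * n) < w (a + 1) ↔ k < K (a, b)) :
    affLength n w = ∑ p : Fin n × Fin n, (K p - if p.1 < p.2 then 0 else 1).toNat := by
  set k₀ : Fin n × Fin n → ℤ := fun p => if p.1 < p.2 then 0 else 1
  have mem_iff : ∀ (a b : Fin n) (k : ℤ), k ∈ Ico (k₀ (a, b)) (K (a, b)) ↔
      (a : ℤ) + 1 < b + 1 + k * n ∧ w (b + 1 + k * n) < w (a + 1) := by
    intro a b k
    rw [mem_Ico, hK, ← Fin.val_lt_val_add_mul_iff]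
    constructor <;> rintro ⟨h₁, h₂⟩ <;> exact ⟨by linarith, h₂⟩
  let φ : {x : (Fin n × Fin n) × ℤ // x.2 ∈ Ico (k₀ x.1) (K x.1)} →
      {p : ℤ × ℤ // 1 ≤ p.1 ∧ p.1 ≤ (n : ℤ) ∧ p.1 < p.2 ∧ w p.2 < w p.1} :=
    fun ⟨((a, b), k), hk⟩ =>
      have hmem := (mem_iff a b k).mp hk
      ⟨(a + 1, b + 1 + k * n), by omega, by omega, hmem⟩
  have hφ : Function.Bijective φ := by
    constructor
    · rintro ⟨⟨⟨a, b⟩, k⟩, hk⟩ ⟨⟨⟨a', b'⟩, k'⟩, hk'⟩ h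
      simp only [φ, Subtype.mk.injEq, Prod.mk.injEq] at h
      have ha : a = a' := Fin.ext (by omega)
      have hkb : (k, b) = (k', b') := (Int.divModEquiv n).symm.injective (by
        simp only [Int.divModEquiv_symm_apply]; omega)
      simp only [Prod.mk.injEq] at hkb
      obtain ⟨rfl, rfl⟩ := hkb
      subst ha
      rfl
    · rintro ⟨⟨i, j⟩, hi₁, hin, hij, hw⟩
      set d := Int.divModEquiv n (j - 1)
      have hd : d.1 * n + d.2 = j - 1 := by
        simpa only [Int.divModEquiv_symm_apply] using (Int.divModEquiv n).symm_apply_apply (j - 1)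
      let a : Fin n := ⟨(i - 1).toNat, by omega⟩
      have ha : (a : ℤ) = i - 1 := by simp only [a]; omega
      refine ⟨⟨((a, d.2), d.1), (mem_iff a d.2 d.1).mpr ?_⟩, ?_⟩
      · rw [ha, show (d.2 : ℤ) + 1 + d.1 * n = j by omega, sub_add_cancel]
        exact ⟨by omega, hw⟩
      · simp only [φ, Subtype.mk.injEq, Prod.mk.injEq]
        omega
  rw [affLength, ← Nat.card_congr (Equiv.ofBijective φ hφ),
    Nat.card_congr (Equiv.subtypeProdEquivSigmaSubtype fun p k => k ∈ Ico (k₀ p) (K p)),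
    Nat.card_sigma]
  simp only [Nat.card_eq_finsetCard, Int.card_Ico, k₀]

theorem Finset.sum_eq_sum_filter_lt_add_swap {α M : Type*} [LinearOrder α] [Fintype α]
    [AddCommMonoid M] (g : α × α → M) (hdiag : ∀ a, g (a, a) = 0) :
    ∑ p, g p = ∑ p with p.1 < p.2, (g p + g p.swap) := by
  rw [sum_add_distrib, ← sum_filter_add_sum_filter_not univ (fun p : α × α => p.1 < p.2)]
  congr 1
  rw [sum_filter, sum_filter, ← (Equiv.prodComm α α).sum_comp]
  refine sum_congr rfl fun ⟨a, b⟩ _ => ?_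
  rcases lt_trichotomy a b with h | rfl | h
  · simp [h, h.not_gt]
  · simp [hdiag]
  · simp [h, h.not_gt]

theorem affine_length_formula_general (n : ℕ) [NeZero n]
    (σ : Equiv.Perm (Fin n)) (c : Fin n → ℤ)
    (w : ℤ → ℤ)
    (hper : ∀ i : ℤ, w (i + n) = w i + n)
    (hw : ∀ i : Fin n, w ((i : ℕ) + 1) = ((σ i : ℕ) + 1 : ℤ) - c i * n) :
    affLength n w =
      ∑ p ∈ Finset.univ.filter (fun p : Fin n × Fin n => p.1 < p.2),
        (c p.1 - c p.2 - (if σ p.1 < σ p.2 then 0 else 1)).natAbs := by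
  have hper' (i k : ℤ) : w (i + k * n) = w i + k * n := by
    simpa using AddConstMapClass.map_add_zsmul (⟨w, hper⟩ : AddConstMap ℤ ℤ n n) i k
  -- by periodicity and `hw`, the inequality reads `(k - c b + c a) * n < σ a - σ b`
  have hK (a b : Fin n) (k : ℤ) : w (b + 1 + k * n) < w (a + 1) ↔
      k < c b - c a + if σ b < σ a then 1 else 0 := by
    rw [hper', hw, hw, ← sub_pos, ← sub_lt_iff_lt_add', ← Fin.mul_lt_val_sub_val_iff]
    constructor <;> intro h <;> linarith
  rw [affLength_eq_sum_toNat (fun p => c p.2 - c p.1 + if σ p.2 < σ p.1 then 1 else 0) hK,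
    sum_eq_sum_filter_lt_add_swap _ fun a => by simp]
  refine sum_congr rfl fun ⟨a, b⟩ hp => ?_
  have hab : a < b := (mem_filter.mp hp).2
  have hσ : σ a ≠ σ b := σ.injective.ne hab.ne
  rw [← Int.toNat_add_toNat_neg_eq_natAbs, add_comm]
  rcases hσ.lt_or_gt with h | h
  · simp [hab, hab.not_gt, h, h.not_gt]
  · simp [hab, hab.not_gt, h, h.not_gt]
    congr 1
    ring

/-- if w is the affine permutation of type Â_{n−1} with affine
permutation matrix ∑ t^{cᵢ} E_{σ(i),i} (so w(i) = σ(i) − cᵢn for 1 ≤ i ≤ n and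
w(i+n) = w(i)+n), with ∑cᵢ = 0, then
l(w) = ∑_{1≤i<j≤n} |cᵢ − cⱼ − f_σ(i,j)| where f_σ(i,j) = 0 if σ(i) < σ(j), else 1. -/
theorem affine_length_formula (n : ℕ) [NeZero n]
    (σ : Equiv.Perm (Fin n)) (c : Fin n → ℤ) (hsum : ∑ i, c i = 0)
    (w : ℤ → ℤ) (hbij : Function.Bijective w)
    (hper : ∀ i : ℤ, w (i + n) = w i + n)
    (hw : ∀ i : Fin n, w ((i : ℕ) + 1) = ((σ i : ℕ) + 1 : ℤ) - c i * n) :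
    affLength n w =
      ∑ p ∈ Finset.univ.filter (fun p : Fin n × Fin n => p.1 < p.2),
        (c p.1 - c p.2 - (if σ p.1 < σ p.2 then 0 else 1)).natAbs :=
  affine_length_formula_general n σ c w hper hw
end

section
/- Let Z be the n×n nilpotent matrix which is a direct sum of nilpotent Jordan blocks of sizes ν₁ ≥ … ≥ ν_s (with ∑νᵢ = n), Z acting as the down-shift within each block scaled appropriately so that (1 − t⁻¹Z) is block diagonal with blocks Zᵢ = I − t⁻¹Nᵢ (Nᵢ the νᵢ×νᵢ Jordan block). Then there exist upper triangular matrices b, c in SL_n(k[t]) with b mod t and c mod t upper triangular over k, such that b(1 − t⁻¹Z)c is a generalized permutation matrix whose nonzero entries are t^{νᵢ−1} in position (block-bottom, block-top) and −t⁻¹ superdiagonal entries within each block. -/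
open Finset Matrix LaurentPolynomial

/-!
All matrices involved are block diagonal, so it suffices to treat a single block `1 - t⁻¹ N` of
size `m`. Left multiplication by `b = (t ^ (i - j))_{i ≥ j}`, the inverse of `1 - t Nᵀ`, turns
it into the matrix with first column `(t ^ i)_i` and `-t⁻¹` on the superdiagonal. Right
multiplication by `c`, which adds `t ^ k` times column `k` to column `0`, then cancels the first
column down to its last entry `t ^ (m - 1)`. Both `b` and `c` are lower unitriangular and
congruent to `1` modulo `t`, which gives the determinant and Iwahori conditions.
-/

theorem Fin.sum_ite_val_eq {M : Type*} [AddCommMonoid M] (m a : ℕ) (f : ℕ → M) :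
    ∑ k : Fin m, (if (k : ℕ) = a then f k else 0) = if a < m then f a else 0 := by
  rw [Fin.sum_univ_eq_sum_range (fun k => if k = a then f k else 0), sum_ite_eq']
  simp

namespace Matrix

theorem det_blockDiagonal' {ι R : Type*} {m : ι → Type*} [CommRing R] [Fintype ι]
    [DecidableEq ι] [∀ i, Fintype (m i)] [∀ i, DecidableEq (m i)]
    (M : ∀ i, Matrix (m i) (m i) R) : (blockDiagonal' M).det = ∏ i, (M i).det := by
  let : LinearOrder ι := LinearOrder.lift' _ (Fintype.equivFin ι).injective
  rw [(blockTriangular_blockDiagonal' M).det_fintype]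
  refine prod_congr rfl fun k _ => ?_
  rw [← det_submatrix_equiv_self (Equiv.sigmaSubtype k).symm]
  congr 1
  ext i j
  simp [toSquareBlock_def, Equiv.sigmaSubtype]

theorem blockDiagonal'_apply_of_val {ι α : Type*} [DecidableEq ι] [Zero α]
    {m : ι → ℕ} (M : ∀ i, Matrix (Fin (m i)) (Fin (m i)) α) (f : ι → ℕ → ℕ → α)
    (hM : ∀ i a b, M i a b = f i a b) (p q : Σ i, Fin (m i)) :
    blockDiagonal' M p q = if p.1 = q.1 then f p.1 p.2 q.2 else 0 := by
  obtain ⟨i, a⟩ := p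
  obtain ⟨j, b⟩ := q
  by_cases h : i = j
  · subst h
    simp [hM]
  · simp [blockDiagonal'_apply_ne _ _ _ h, h]

def nilpotentJordanBlock {R : Type*} [Zero R] [One R] (m : ℕ) : Matrix (Fin m) (Fin m) R :=
  of fun i j => if (i : ℕ) + 1 = j then 1 else 0

def affinePermBlock {R : Type*} [Ring R] (t t' : R) (m : ℕ) : Matrix (Fin m) (Fin m) R :=
  of fun i j => (if (i : ℕ) = m - 1 ∧ (j : ℕ) = 0 then t ^ (m - 1) else 0)
    + if (j : ℕ) = i + 1 then -t' else 0

section MonoidWithZero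

variable {R : Type*} [MonoidWithZero R]

def lowerPowers (x : R) (m : ℕ) : Matrix (Fin m) (Fin m) R :=
  of fun i j => if (j : ℕ) ≤ i then x ^ ((i : ℕ) - j) else 0

def firstColumnPowers (x : R) (m : ℕ) : Matrix (Fin m) (Fin m) R :=
  of fun i j => if (j : ℕ) = 0 then x ^ (i : ℕ) else if i = j then 1 else 0

theorem lowerPowers_map {S F : Type*} [MonoidWithZero S] [FunLike F R S]
    [MonoidWithZeroHomClass F R S] (f : F) (x : R) (m : ℕ) :
    (lowerPowers x m).map f = lowerPowers (f x) m := by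
  ext i j
  simp [lowerPowers, apply_ite f]

theorem firstColumnPowers_map {S F : Type*} [MonoidWithZero S] [FunLike F R S]
    [MonoidWithZeroHomClass F R S] (f : F) (x : R) (m : ℕ) :
    (firstColumnPowers x m).map f = firstColumnPowers (f x) m := by
  ext i j
  simp [firstColumnPowers, apply_ite f]

theorem lowerPowers_zero (m : ℕ) : lowerPowers (0 : R) m = 1 := by
  ext i j
  simp only [lowerPowers, of_apply, one_apply, zero_pow_eq, Fin.ext_iff]
  split_ifs <;> first | rfl | omega

theorem firstColumnPowers_zero (m : ℕ) : firstColumnPowers (0 : R) m = 1 := by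
  ext i j
  simp only [firstColumnPowers, of_apply, one_apply, zero_pow_eq, Fin.ext_iff]
  split_ifs <;> first | rfl | omega

end MonoidWithZero

section CommRing

variable {R : Type*} [CommRing R]

theorem det_lowerPowers (x : R) (m : ℕ) : (lowerPowers x m).det = 1 := by
  rw [det_of_isLowerTriangular (lowerPowers x m) fun i j (h : i < j) => by
    rw [lowerPowers, of_apply, if_neg (by omega)]]
  simp [lowerPowers]

theorem det_firstColumnPowers (x : R) (m : ℕ) : (firstColumnPowers x m).det = 1 := by
  rw [det_of_isLowerTriangular (firstColumnPowers x m) fun i j (h : i < j) => by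
    rw [firstColumnPowers, of_apply, if_neg (by omega), if_neg h.ne]]
  refine prod_eq_one fun i _ => ?_
  by_cases hi : (i : ℕ) = 0 <;> simp [firstColumnPowers, hi]

theorem mul_nilpotentJordanBlock_apply {m : ℕ} (M : Matrix (Fin m) (Fin m) R) (i j : Fin m) :
    (M * nilpotentJordanBlock m : Matrix (Fin m) (Fin m) R) i j =
      if h : (j : ℕ) = 0 then 0 else M i ⟨j - 1, by omega⟩ := by
  rw [mul_apply]
  simp only [nilpotentJordanBlock, of_apply, mul_ite, mul_one, mul_zero]
  split_ifs with hj
  · exact sum_eq_zero fun k _ => if_neg (by omega)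
  · rw [sum_eq_single_of_mem ⟨j - 1, by omega⟩ (mem_univ _), if_pos (by dsimp only; omega)]
    exact fun k _ hk => if_neg fun h => hk (Fin.ext (by dsimp only; omega))

theorem lowerPowers_mul_one_sub_smul_nilpotentJordanBlock {t t' : R} (ht : t' * t = 1) (m : ℕ) :
    lowerPowers t m * (1 - t' • nilpotentJordanBlock m) =
      of fun (i j : Fin m) =>
        (if (j : ℕ) = 0 then t ^ (i : ℕ) else 0) - if (j : ℕ) = i + 1 then t' else 0 := by
  ext i j
  rw [mul_sub, mul_one, Matrix.mul_smul, sub_apply, smul_apply, mul_nilpotentJordanBlock_apply]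
  simp only [lowerPowers, of_apply, smul_eq_mul]
  split_ifs <;> try omega
  · simp only [‹(j : ℕ) = 0›, Nat.sub_zero, mul_zero, sub_zero]
  · rw [show (i : ℕ) - (j - 1) = (i - j) + 1 by omega, pow_succ]
    linear_combination -t ^ ((i : ℕ) - j) * ht
  · rw [show (i : ℕ) - (j - 1) = 0 by omega, pow_zero, mul_one]
  · simp

theorem lowerPowers_mul_one_sub_smul_nilpotentJordanBlock_mul_firstColumnPowers {t t' : R}
    (ht : t' * t = 1) (m : ℕ) :
    lowerPowers t m * (1 - t' • nilpotentJordanBlock m) * firstColumnPowers t m =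
      affinePermBlock t t' m := by
  rw [lowerPowers_mul_one_sub_smul_nilpotentJordanBlock ht]
  ext i j
  rw [mul_apply]
  simp only [firstColumnPowers, affinePermBlock, of_apply]
  by_cases hj : (j : ℕ) = 0
  · simp only [hj, if_true, and_true, sub_mul, ite_mul, zero_mul, sum_sub_distrib]
    rw [Fin.sum_ite_val_eq m 0 (fun k => t ^ (i : ℕ) * t ^ k),
      Fin.sum_ite_val_eq m (i + 1) (fun k => t' * t ^ k), if_pos i.pos,
      if_neg (by omega : (0 : ℕ) ≠ i + 1), pow_zero, mul_one, add_zero]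
    by_cases hi : (i : ℕ) + 1 < m
    · rw [if_pos hi, if_neg (by omega), pow_succ]
      linear_combination -t ^ (i : ℕ) * ht
    · rw [if_neg hi, if_pos (by omega), sub_zero, show m - 1 = i by omega]
  · simp only [hj, if_false, and_false, zero_add, mul_ite, mul_one, mul_zero, sum_ite_eq',
      mem_univ, if_true]
    split_ifs <;> simp

theorem eval_zero_apply_eq_zero_of_map_eq_one {n : Type*} [DecidableEq n]
    {M : Matrix n n (Polynomial R)} (hM : M.map (Polynomial.evalRingHom 0) = 1) {p q : n}
    (hpq : p ≠ q) : (M p q).eval 0 = 0 := by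
  simpa [hpq] using congrFun₂ hM p q

section BlockDiagonal

variable {ι : Type*} [DecidableEq ι]

theorem blockDiagonal'_nilpotentJordanBlock_apply (m : ι → ℕ) (p q : Σ i, Fin (m i)) :
    blockDiagonal' (fun i => (nilpotentJordanBlock (m i) : Matrix _ _ R)) p q =
      if p.1 = q.1 ∧ (p.2 : ℕ) + 1 = q.2 then 1 else 0 := by
  rw [blockDiagonal'_apply_of_val (fun i => nilpotentJordanBlock (m i))
    (fun _ a b => if a + 1 = b then 1 else 0) (fun _ _ _ => rfl), ite_and]

theorem blockDiagonal'_affinePermBlock_apply (t t' : R) (m : ι → ℕ) (p q : Σ i, Fin (m i)) :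
    blockDiagonal' (fun i => affinePermBlock t t' (m i)) p q =
      if p.1 = q.1 then
        (if (p.2 : ℕ) = m p.1 - 1 ∧ (q.2 : ℕ) = 0 then t ^ (m p.1 - 1) else 0)
          + if (q.2 : ℕ) = p.2 + 1 then -t' else 0
      else 0 :=
  blockDiagonal'_apply_of_val (fun i => affinePermBlock t t' (m i))
    (fun i a b =>
      (if a = m i - 1 ∧ b = 0 then t ^ (m i - 1) else 0) + if b = a + 1 then -t' else 0)
    (fun _ _ _ => rfl) p q

theorem blockDiagonal'_lowerPowers_X_map_evalRingHom_zero (m : ι → ℕ) :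
    (blockDiagonal' fun i => lowerPowers (Polynomial.X : Polynomial R) (m i)).map
      (Polynomial.evalRingHom 0) = 1 := by
  rw [blockDiagonal'_map _ _ (map_zero _)]
  simp only [lowerPowers_map]
  simp only [Polynomial.coe_evalRingHom, Polynomial.eval_X, lowerPowers_zero]
  exact blockDiagonal'_one

theorem blockDiagonal'_firstColumnPowers_X_map_evalRingHom_zero (m : ι → ℕ) :
    (blockDiagonal' fun i => firstColumnPowers (Polynomial.X : Polynomial R) (m i)).map
      (Polynomial.evalRingHom 0) = 1 := by
  rw [blockDiagonal'_map _ _ (map_zero _)]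
  simp only [firstColumnPowers_map]
  simp only [Polynomial.coe_evalRingHom, Polynomial.eval_X, firstColumnPowers_zero]
  exact blockDiagonal'_one

theorem blockDiagonal'_lowerPowers_mul_one_sub_smul_mul_firstColumnPowers [Fintype ι]
    {t t' : R} (ht : t' * t = 1) (m : ι → ℕ) :
    blockDiagonal' (fun i => lowerPowers t (m i)) *
        (1 - t' • blockDiagonal' fun i => nilpotentJordanBlock (m i)) *
        blockDiagonal' (fun i => firstColumnPowers t (m i)) =
      blockDiagonal' fun i => affinePermBlock t t' (m i) := by
  rw [← blockDiagonal'_one, ← blockDiagonal'_smul, ← blockDiagonal'_sub,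
    ← blockDiagonal'_mul, ← blockDiagonal'_mul]
  exact congrArg blockDiagonal' <| funext fun i =>
    lowerPowers_mul_one_sub_smul_nilpotentJordanBlock_mul_firstColumnPowers ht (m i)

end BlockDiagonal

end CommRing

end Matrix

theorem one_sub_tinv_Z_bruhat_cell_general (K : Type*) [Field K] (s : ℕ)
    (ν : Fin s → ℕ)
    (Z : Matrix (Σ i : Fin s, Fin (ν i)) (Σ i : Fin s, Fin (ν i)) K)
    (hZ : ∀ p q : Σ i : Fin s, Fin (ν i),
      Z p q = if p.1 = q.1 ∧ (p.2 : ℕ) + 1 = (q.2 : ℕ) then 1 else 0)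
    (d : ℕ → ℕ) :
    ∃ b c : Matrix (Σ i : Fin s, Fin (ν i)) (Σ i : Fin s, Fin (ν i)) (Polynomial K),
      b.det = 1 ∧ c.det = 1 ∧
      (∀ p q : Σ i : Fin s, Fin (ν i),
        d q.1 + (q.2 : ℕ) < d p.1 + (p.2 : ℕ) → ((b p q).eval 0 = 0)) ∧
      (∀ p q : Σ i : Fin s, Fin (ν i),
        d q.1 + (q.2 : ℕ) < d p.1 + (p.2 : ℕ) → ((c p q).eval 0 = 0)) ∧
      (b.map (Polynomial.toLaurent))
          * ((1 : Matrix _ _ (LaurentPolynomial K))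
              - (T (-1) : LaurentPolynomial K) • Z.map (algebraMap K (LaurentPolynomial K)))
          * (c.map (Polynomial.toLaurent))
        = Matrix.of (fun p q : Σ i : Fin s, Fin (ν i) =>
            if p.1 = q.1 then
              (if (p.2 : ℕ) = ν p.1 - 1 ∧ (q.2 : ℕ) = 0
                then (T ((ν p.1 : ℤ) - 1) : LaurentPolynomial K) else 0)
              + (if (q.2 : ℕ) = (p.2 : ℕ) + 1
                then -(T (-1) : LaurentPolynomial K) else 0)
            else 0) := by
  have hZ' : Z.map (algebraMap K (LaurentPolynomial K)) =
      blockDiagonal' fun i => nilpotentJordanBlock (ν i) := by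
    ext p q
    rw [map_apply, hZ, blockDiagonal'_nilpotentJordanBlock_apply, apply_ite (algebraMap _ _),
      map_one, map_zero]
  have hT : (T (-1) : LaurentPolynomial K) * T 1 = 1 := by rw [← T_add, neg_add_cancel, T_zero]
  have hne {p q : Σ i : Fin s, Fin (ν i)} (h : d q.1 + (q.2 : ℕ) < d p.1 + p.2) : p ≠ q :=
    ne_of_apply_ne (fun r => d r.1 + (r.2 : ℕ)) h.ne'
  refine ⟨blockDiagonal' fun i => lowerPowers Polynomial.X (ν i),
    blockDiagonal' fun i => firstColumnPowers Polynomial.X (ν i),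
    by simp [det_blockDiagonal', det_lowerPowers],
    by simp [det_blockDiagonal', det_firstColumnPowers],
    fun p q h => eval_zero_apply_eq_zero_of_map_eq_one
      (blockDiagonal'_lowerPowers_X_map_evalRingHom_zero ν) (hne h),
    fun p q h => eval_zero_apply_eq_zero_of_map_eq_one
      (blockDiagonal'_firstColumnPowers_X_map_evalRingHom_zero ν) (hne h), ?_⟩
  rw [blockDiagonal'_map _ _ (map_zero _), blockDiagonal'_map _ _ (map_zero _), hZ']
  simp only [lowerPowers_map, firstColumnPowers_map, Polynomial.toLaurent_X]
  rw [blockDiagonal'_lowerPowers_mul_one_sub_smul_mul_firstColumnPowers hT]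
  ext p q
  rw [blockDiagonal'_affinePermBlock_apply, of_apply, T_pow, mul_one, Nat.cast_pred p.2.pos]

/-- Let Z be the nilpotent matrix which is the direct sum of Jordan
blocks of sizes ν₁ ≥ … ≥ ν_s (∑νᵢ = n), indexed by the sigma type Σ i, Fin (νᵢ).
Then there exist matrices b, c over k[t] of determinant 1, which are upper triangular
modulo t (i.e. lie in the Iwahori subgroup ℬ), such that b·(1 − t⁻¹Z)·c is the
generalized permutation matrix ϖ with entries t^{νᵢ−1} at (block-bottom, block-top)
and −t⁻¹ on the superdiagonal within each block. -/
theorem one_sub_tinv_Z_bruhat_cell (K : Type*) [Field K] (n s : ℕ)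
    (ν : Fin s → ℕ) (hpos : ∀ i, 0 < ν i) (hant : Antitone ν) (hsum : ∑ i, ν i = n)
    (Z : Matrix (Σ i : Fin s, Fin (ν i)) (Σ i : Fin s, Fin (ν i)) K)
    (hZ : ∀ p q : Σ i : Fin s, Fin (ν i),
      Z p q = if p.1 = q.1 ∧ (p.2 : ℕ) + 1 = (q.2 : ℕ) then 1 else 0)
    (d : ℕ → ℕ)
    (hd : ∀ k : ℕ, d k = ∑ j ∈ Finset.univ.filter (fun j : Fin s => (j : ℕ) < k), ν j) :
    ∃ b c : Matrix (Σ i : Fin s, Fin (ν i)) (Σ i : Fin s, Fin (ν i)) (Polynomial K),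
      b.det = 1 ∧ c.det = 1 ∧
      (∀ p q : Σ i : Fin s, Fin (ν i),
        d q.1 + (q.2 : ℕ) < d p.1 + (p.2 : ℕ) → ((b p q).eval 0 = 0)) ∧
      (∀ p q : Σ i : Fin s, Fin (ν i),
        d q.1 + (q.2 : ℕ) < d p.1 + (p.2 : ℕ) → ((c p q).eval 0 = 0)) ∧
      (b.map (Polynomial.toLaurent))
          * ((1 : Matrix _ _ (LaurentPolynomial K))
              - (T (-1) : LaurentPolynomial K) • Z.map (algebraMap K (LaurentPolynomial K)))
          * (c.map (Polynomial.toLaurent))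
        = Matrix.of (fun p q : Σ i : Fin s, Fin (ν i) =>
            if p.1 = q.1 then
              (if (p.2 : ℕ) = ν p.1 - 1 ∧ (q.2 : ℕ) = 0
                then (T ((ν p.1 : ℤ) - 1) : LaurentPolynomial K) else 0)
              + (if (q.2 : ℕ) = (p.2 : ℕ) + 1
                then -(T (-1) : LaurentPolynomial K) else 0)
            else 0) :=
  one_sub_tinv_Z_bruhat_cell_general K s ν Z hZ d
end

section
/- Let w: ℤ → ℤ be the affine permutation of type Â_{n−1} given (in terms of the construction κ of the paper) by the affine permutation matrix ∑_{i=1}^s t^{νᵢ−1}E_{i,l(i)} + ∑_{i=1}^{n−s} t⁻¹E_{i+s,m(i)}, where ν₁ ≥ … ≥ ν_s is the conjugate partition attached to a composition λ of n, and l(1)<…<l(s) enumerate the 'Red' entries and m(1),…,m(n−s) the 'Blue' entries as in the paper. Then the length of κ equals 2·dim(G/P) + ∑_{k'<k} #Row(k)·#Blue(k'), where dim(G/P) = (n² − ∑λᵢ²)/2. -/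
/-!
Write `κ` on the window `[1, n]` as `κ x = ρ x + σ x * n` with `ρ x ∈ [1, n]`. An inversion
`(a, b + k * n)` with `a, b` in the window is then counted pair by pair: the ordered pair `(a, b)`
contributes `(σ a - σ b + [ρ b < ρ a] - [b ≤ a])₊` inversions (Shi's formula). Red entries have
`ρ (l i) = i`, `σ (l i) = 1 - ν i`, blue entries `ρ (m i) = s + i`, `σ (m i) = 1`. Hence a red-red
pair `(l i, l j)` with `j < i` contributes `ν j - ν i = #{k | j ≤ λₖ < i}`, in total
`∑ₖ λₖ (s - λₖ)`; red-blue pairs contribute nothing; a blue-red pair `(m i, l j)` contributes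
`ν j`, in total `(n - s) n`, plus one if `m i < l j`; and a blue-blue pair `(m i, m j)` contributes
one if `j < i` and `m i < m j`. The `λ`-terms add up to `n² - ∑ λₖ²`, and the indicator terms
count exactly the pairs (blue entry, entry of a later row), since both conditions say that the
second entry lies in a later row than the first.
-/

open Finset

section AffinePermutation

variable {n : ℕ} {κ : ℤ → ℤ}

lemma map_add_mul_of_map_add (hκ : ∀ x, κ (x + n) = κ x + n) (x k : ℤ) :
    κ (x + k * n) = κ x + k * n := by
  induction k using Int.induction_on generalizing x with
  | zero => simp
  | succ k ih => rw [add_one_mul, ← add_assoc, hκ, ih]; ring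
  | pred k ih =>
    have := hκ (x + (-k - 1) * n)
    rw [add_assoc, ← add_one_mul, sub_add_cancel, ih] at this
    linarith

/-- For `a, b` in the window `[1, n]`, the shifts `k` for which `(a, b + k * n)` is an inversion
of `κ`: the lower bound encodes `a < b + k * n`, the upper one `κ (b + k * n) < κ a`. -/
noncomputable def inversionShifts (n : ℕ) (κ : ℤ → ℤ) (a b : ℤ) : Finset ℤ :=
  Icc (if b ≤ a then 1 else 0) ((κ a - κ b - 1) / n)

lemma mem_inversionShifts (hκ : ∀ x, κ (x + n) = κ x + n) {a b k : ℤ}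
    (ha : 1 ≤ a ∧ a ≤ n) (hb : 1 ≤ b ∧ b ≤ n) :
    k ∈ inversionShifts n κ a b ↔ a < b + k * n ∧ κ (b + k * n) < κ a := by
  have hn : (0 : ℤ) < n := by omega
  rw [inversionShifts, mem_Icc, Int.le_ediv_iff_mul_le hn, map_add_mul_of_map_add hκ]
  refine and_congr ?_ (by omega)
  split_ifs <;> constructor <;> intro h <;> nlinarith

lemma exists_mem_Icc_eq_add_ediv_mul (y : ℤ) (hn : 0 < n) :
    ∃ b : ℕ, (1 ≤ b ∧ b ≤ n) ∧ y = b + (y - 1) / n * n := by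
  have := Int.emod_add_ediv_mul (y - 1) n
  have := Int.emod_nonneg (y - 1) (b := n) (by omega)
  have := Int.emod_lt_of_pos (y - 1) (b := n) (by omega)
  exact ⟨((y - 1) % n + 1).toNat, by omega, by omega⟩

lemma eq_and_eq_of_add_mul_eq_add_mul {b b' : ℕ} {k k' : ℤ} (hb : 1 ≤ b ∧ b ≤ n)
    (hb' : 1 ≤ b' ∧ b' ≤ n) (h : (b : ℤ) + k * n = b' + k' * n) : b = b' ∧ k = k' := by
  obtain rfl : k = k' := by
    rcases lt_trichotomy k k' with hlt | heq | hgt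
    · nlinarith
    · exact heq
    · nlinarith
  omega

theorem affLength_eq_sum_card_inversionShifts (hκ : ∀ x, κ (x + n) = κ x + n) :
    affLength n κ = ∑ a ∈ Icc 1 n, ∑ b ∈ Icc 1 n, #(inversionShifts n κ a b) := by
  set T := (Icc 1 n ×ˢ Icc 1 n).sigma fun p : ℕ × ℕ => inversionShifts n κ p.1 p.2
  set f : (_ : ℕ × ℕ) × ℤ → ℤ × ℤ := fun q => (q.1.1, q.1.2 + q.2 * n)
  have hT : {p : ℤ × ℤ | 1 ≤ p.1 ∧ p.1 ≤ n ∧ p.1 < p.2 ∧ κ p.2 < κ p.1} = ↑(T.image f) := by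
    ext ⟨x, y⟩
    simp only [Set.mem_ofPred_eq, coe_image, Set.mem_image, mem_coe, T, f, mem_sigma,
      mem_product, mem_Icc, Sigma.exists, Prod.exists, Prod.mk.injEq]
    constructor
    · rintro ⟨hx1, hxn, hxy, hκxy⟩
      obtain ⟨b, hb, hy⟩ := exists_mem_Icc_eq_add_ediv_mul (n := n) y (by omega)
      refine ⟨x.toNat, b, (y - 1) / n, ⟨⟨⟨by omega, by omega⟩, hb⟩, ?_⟩, by omega, hy.symm⟩
      rw [mem_inversionShifts hκ (by omega) (by exact_mod_cast hb), ← hy,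
        show ((x.toNat : ℕ) : ℤ) = x by omega]
      exact ⟨hxy, hκxy⟩
    · rintro ⟨a, b, k, ⟨⟨ha, hb⟩, hk⟩, rfl, rfl⟩
      rw [mem_inversionShifts hκ (by exact_mod_cast ha) (by exact_mod_cast hb)] at hk
      exact ⟨by exact_mod_cast ha.1, by exact_mod_cast ha.2, hk⟩
  have hf : Set.InjOn f T := by
    rintro ⟨⟨a, b⟩, k⟩ hq ⟨⟨a', b'⟩, k'⟩ hq' h
    simp only [T, coe_sigma, Set.mem_sigma_iff, coe_product, Set.mem_prod, coe_Icc,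
      Set.mem_Icc, f, Prod.mk.injEq, Nat.cast_inj] at hq hq' h
    obtain ⟨rfl, rfl⟩ := eq_and_eq_of_add_mul_eq_add_mul hq.1.2 hq'.1.2 h.2
    rw [h.1]
  rw [affLength, ← Set.coe_ofPred, Nat.card_coe_set_eq, hT, Set.ncard_coe_finset,
    card_image_of_injOn hf, card_sigma, sum_product]

lemma card_inversionShifts_eq_toNat {a b ρa ρb σa σb : ℤ} (hρa : 1 ≤ ρa ∧ ρa ≤ n)
    (hρb : 1 ≤ ρb ∧ ρb ≤ n) (ha : κ a = ρa + σa * n) (hb : κ b = ρb + σb * n) :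
    #(inversionShifts n κ a b) =
      (σa - σb + (if ρb < ρa then 1 else 0) - (if b ≤ a then 1 else 0)).toNat := by
  have hdiv : (κ a - κ b - 1) / n = σa - σb - (if ρb < ρa then 0 else 1) := by
    have key (c q : ℤ) (h0 : 0 ≤ c) (h1 : c < n) : (c + q * n) / n = q := by
      rw [Int.add_mul_ediv_right _ _ (by omega), Int.ediv_eq_zero_of_lt h0 h1, zero_add]
    split_ifs
    · rw [← key (ρa - ρb - 1) (σa - σb) (by omega) (by omega), ha, hb]; ring_nf
    · rw [← key (ρa - ρb - 1 + n) (σa - σb - 1) (by omega) (by omega), ha, hb]; ring_nf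
  rw [inversionShifts, Int.card_Icc, hdiv]
  split_ifs <;> omega

end AffinePermutation

lemma sum_sum_union_image {ι α M : Type*} [DecidableEq α] [AddCommMonoid M] {I J : Finset ι}
    {l m : ι → α} (hl : Set.InjOn l I) (hm : Set.InjOn m J)
    (hlm : Disjoint (I.image l) (J.image m)) (f : α → α → M) :
    ∑ a ∈ I.image l ∪ J.image m, ∑ b ∈ I.image l ∪ J.image m, f a b =
      ∑ i ∈ I, ∑ j ∈ I, f (l i) (l j) + ∑ i ∈ I, ∑ j ∈ J, f (l i) (m j) +
        (∑ i ∈ J, ∑ j ∈ I, f (m i) (l j) + ∑ i ∈ J, ∑ j ∈ J, f (m i) (m j)) := by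
  simp only [sum_union hlm, sum_image hl, sum_image hm, sum_add_distrib]

section RedBlue

variable {n s : ℕ} {κ : ℤ → ℤ} {ν : ℕ → ℕ} {l m : ℕ → ℕ} {i j : ℕ}

lemma card_inversionShifts_red_red (hsn : s ≤ n) (hν : Antitone ν)
    (hl : StrictMonoOn l (Set.Icc 1 s))
    (hκl : ∀ i : ℕ, 1 ≤ i → i ≤ s → κ (l i) = (i : ℤ) - ((ν i : ℤ) - 1) * n)
    (hi : i ∈ Icc 1 s) (hj : j ∈ Icc 1 s) :
    #(inversionShifts n κ (l i) (l j)) = if j < i then ν j - ν i else 0 := by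
  rw [mem_Icc] at hi hj
  rw [card_inversionShifts_eq_toNat (ρa := i) (ρb := j) (σa := 1 - ν i) (σb := 1 - ν j)
    (by omega) (by omega) (by rw [hκl i hi.1 hi.2]; ring) (by rw [hκl j hj.1 hj.2]; ring)]
  rcases lt_or_ge j i with hji | hij
  · have := hν hji.le
    have := hl hj hi hji
    split_ifs <;> omega
  · have := hν hij
    have := hl.monotoneOn hi hj hij
    split_ifs <;> omega

lemma card_inversionShifts_red_blue (hsn : s ≤ n)
    (hκl : ∀ i : ℕ, 1 ≤ i → i ≤ s → κ (l i) = (i : ℤ) - ((ν i : ℤ) - 1) * n)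
    (hκm : ∀ i : ℕ, 1 ≤ i → i ≤ n - s → κ (m i) = ((i : ℤ) + s) + n)
    (hi : i ∈ Icc 1 s) (hj : j ∈ Icc 1 (n - s)) : #(inversionShifts n κ (l i) (m j)) = 0 := by
  rw [mem_Icc] at hi hj
  rw [card_inversionShifts_eq_toNat (ρa := i) (ρb := j + s) (σa := 1 - ν i) (σb := 1)
    (by omega) (by omega) (by rw [hκl i hi.1 hi.2]; ring) (by rw [hκm j hj.1 hj.2]; ring)]
  split_ifs <;> omega

lemma card_inversionShifts_blue_red (hsn : s ≤ n)
    (hκl : ∀ i : ℕ, 1 ≤ i → i ≤ s → κ (l i) = (i : ℤ) - ((ν i : ℤ) - 1) * n)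
    (hκm : ∀ i : ℕ, 1 ≤ i → i ≤ n - s → κ (m i) = ((i : ℤ) + s) + n)
    (hi : i ∈ Icc 1 (n - s)) (hj : j ∈ Icc 1 s) :
    #(inversionShifts n κ (m i) (l j)) = ν j + if m i < l j then 1 else 0 := by
  rw [mem_Icc] at hi hj
  rw [card_inversionShifts_eq_toNat (ρa := i + s) (ρb := j) (σa := 1) (σb := 1 - ν j)
    (by omega) (by omega) (by rw [hκm i hi.1 hi.2]; ring) (by rw [hκl j hj.1 hj.2]; ring)]
  split_ifs <;> omega

lemma card_inversionShifts_blue_blue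
    (hκm : ∀ i : ℕ, 1 ≤ i → i ≤ n - s → κ (m i) = ((i : ℤ) + s) + n)
    (hi : i ∈ Icc 1 (n - s)) (hj : j ∈ Icc 1 (n - s)) :
    #(inversionShifts n κ (m i) (m j)) = if j < i ∧ m i < m j then 1 else 0 := by
  rw [mem_Icc] at hi hj
  rw [card_inversionShifts_eq_toNat (ρa := i + s) (ρb := j + s) (σa := 1) (σb := 1)
    (by omega) (by omega) (by rw [hκm i hi.1 hi.2]; ring) (by rw [hκm j hj.1 hj.2]; ring)]
  split_ifs <;> omega

theorem affLength_eq_of_red_blue (hsn : s ≤ n) (hκ : ∀ x, κ (x + n) = κ x + n)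
    (hν : Antitone ν) (hl : StrictMonoOn l (Set.Icc 1 s)) (hm : Set.InjOn m (Icc 1 (n - s)))
    (hlm : Disjoint ((Icc 1 s).image l) ((Icc 1 (n - s)).image m))
    (hcover : (Icc 1 s).image l ∪ (Icc 1 (n - s)).image m = Icc 1 n)
    (hκl : ∀ i : ℕ, 1 ≤ i → i ≤ s → κ (l i) = (i : ℤ) - ((ν i : ℤ) - 1) * n)
    (hκm : ∀ i : ℕ, 1 ≤ i → i ≤ n - s → κ (m i) = ((i : ℤ) + s) + n) :
    affLength n κ = ∑ i ∈ Icc 1 s, ∑ j ∈ Icc 1 s, (if j < i then ν j - ν i else 0)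
      + (n - s) * ∑ j ∈ Icc 1 s, ν j
      + ∑ i ∈ Icc 1 (n - s), ∑ j ∈ Icc 1 s, (if m i < l j then 1 else 0)
      + ∑ i ∈ Icc 1 (n - s), ∑ j ∈ Icc 1 (n - s), (if j < i ∧ m i < m j then 1 else 0) := by
  rw [affLength_eq_sum_card_inversionShifts hκ, ← hcover,
    sum_sum_union_image (hl.injOn.mono (by simp)) hm hlm,
    sum_congr rfl fun i hi => sum_congr rfl fun j hj =>
      card_inversionShifts_red_red hsn hν hl hκl hi hj,
    sum_congr rfl fun i hi => sum_congr rfl fun j hj =>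
      card_inversionShifts_red_blue hsn hκl hκm hi hj,
    sum_congr rfl fun i hi => sum_congr rfl fun j hj =>
      card_inversionShifts_blue_red hsn hκl hκm hi hj,
    sum_congr rfl fun i hi => sum_congr rfl fun j hj => card_inversionShifts_blue_blue hκm hi hj]
  simp only [sum_const_zero, sum_add_distrib, sum_const, Nat.card_Icc, Nat.add_sub_cancel,
    smul_eq_mul]
  ring

end RedBlue

lemma card_filter_Icc_le {a s : ℕ} (h : a ≤ s) : #((Icc 1 s).filter (· ≤ a)) = a := by
  rw [show (Icc 1 s).filter (· ≤ a) = Icc 1 a by ext; simp only [mem_filter, mem_Icc]; omega]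
  simp

lemma card_filter_Icc_lt {a s : ℕ} : #((Icc 1 s).filter (a < ·)) = s - a := by
  rw [show (Icc 1 s).filter (a < ·) = Icc (a + 1) s by ext; simp only [mem_filter, mem_Icc]; omega]
  simp

section Conjugate

variable {ι : Type*} [Fintype ι] {lam : ι → ℕ} {ν : ℕ → ℕ} {s : ℕ}

lemma antitone_of_eq_card_filter_le (hν : ∀ i, ν i = #(univ.filter fun j => i ≤ lam j)) :
    Antitone ν := fun i i' h => by
  rw [hν, hν]
  exact card_le_card fun j => by simp only [mem_filter, mem_univ, true_and]; omega

lemma sum_Icc_eq_sum_of_eq_card_filter_le (hν : ∀ i, ν i = #(univ.filter fun j => i ≤ lam j))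
    (hs : ∀ j, lam j ≤ s) : ∑ i ∈ Icc 1 s, ν i = ∑ j, lam j := by
  simp_rw [hν]
  exact (sum_card_bipartiteAbove_eq_sum_card_bipartiteBelow (r := fun i j => i ≤ lam j)).trans
    (sum_congr rfl fun j _ => card_filter_Icc_le (hs j))

lemma sub_eq_card_filter_of_eq_card_filter_le (hν : ∀ i, ν i = #(univ.filter fun j => i ≤ lam j))
    {i i' : ℕ} (h : i ≤ i') : ν i - ν i' = #(univ.filter fun j => i ≤ lam j ∧ lam j < i') := by
  classical
  rw [hν, hν, ← card_sdiff_of_subset fun j => by simp only [mem_filter, mem_univ, true_and]; omega]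
  congr 1
  ext j
  simp only [mem_sdiff, mem_filter, mem_univ, true_and, not_le]

lemma sum_sum_Icc_ite_sub_of_eq_card_filter_le
    (hν : ∀ i, ν i = #(univ.filter fun j => i ≤ lam j)) (hs : ∀ j, lam j ≤ s) :
    ∑ i ∈ Icc 1 s, ∑ i' ∈ Icc 1 s, (if i' < i then ν i' - ν i else 0) =
      ∑ j, lam j * (s - lam j) := by
  have hterm (i i' : ℕ) : (if i' < i then ν i' - ν i else 0) =
      ∑ j, (if i' ≤ lam j then 1 else 0) * (if lam j < i then 1 else 0) := by
    simp only [ite_zero_mul_ite_zero, mul_one, ← card_filter]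
    split_ifs with h
    · exact sub_eq_card_filter_of_eq_card_filter_le hν h.le
    · exact (card_eq_zero.2 (filter_eq_empty_iff.2 fun j _ => by omega)).symm
  simp_rw [hterm]
  rw [sum_comm]
  simp_rw [sum_comm (s := Icc 1 s) (t := univ), ← mul_sum, ← sum_mul, sum_boole,
    card_filter_Icc_lt, Nat.cast_id]
  exact sum_congr rfl fun j _ => by rw [card_filter_Icc_le (hs j)]

lemma sum_mul_sub_add_sub_mul_eq (hs : ∀ j, lam j ≤ s) (hsn : s ≤ ∑ j, lam j) :
    ∑ j, lam j * (s - lam j) + (∑ j, lam j - s) * ∑ j, lam j =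
      (∑ j, lam j) ^ 2 - ∑ j, lam j ^ 2 := by
  have h1 : ∑ j, lam j * (s - lam j) + ∑ j, lam j ^ 2 = s * ∑ j, lam j := by
    rw [← sum_add_distrib, mul_sum]
    refine sum_congr rfl fun j _ => ?_
    rw [sq, ← mul_add, Nat.sub_add_cancel (hs j), mul_comm]
  have h2 : (∑ j, lam j - s) * ∑ j, lam j + s * ∑ j, lam j = (∑ j, lam j) ^ 2 := by
    rw [← add_mul, Nat.sub_add_cancel hsn, sq]
  omega

end Conjugate

section Composition

variable {r : ℕ}

lemma monotone_sum_filter_val_lt (lam : Fin r → ℕ) :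
    Monotone fun k => ∑ j ∈ univ.filter (fun j : Fin r => (j : ℕ) < k), lam j :=
  fun _ _ h => sum_le_sum_of_subset fun j => by simp only [mem_filter, mem_univ, true_and]; omega

lemma Monotone.biUnion_range_Ioc {d : ℕ → ℕ} (hd : Monotone d) (K : ℕ) :
    (range K).biUnion (fun k => Ioc (d k) (d (k + 1))) = Ioc (d 0) (d K) :=
  coe_injective (by simpa using hd.biUnion_Ico_Ioc_map_succ 0 K)

lemma biUnion_range_Ioc_eq_Icc {lam : Fin r → ℕ} {d : ℕ → ℕ}
    (hd : ∀ k, d k = ∑ j ∈ univ.filter (fun j : Fin r => (j : ℕ) < k), lam j) :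
    (range r).biUnion (fun k => Ioc (d k) (d (k + 1))) = Icc 1 (∑ j, lam j) := by
  have h0 : d 0 = 0 := by simp [hd]
  have hr : d r = ∑ j, lam j := by rw [hd, filter_true_of_mem fun j _ => j.isLt]
  rw [(funext hd ▸ monotone_sum_filter_val_lt lam : Monotone d).biUnion_range_Ioc, h0, hr]
  exact (Icc_succ_left_eq_Ioc 0 _).symm

lemma card_filter_lt_eq_of_mem_Ioc {d : ℕ → ℕ} (hd : Monotone d) {k x : ℕ} (hk : k < r)
    (hx : x ∈ Ioc (d k) (d (k + 1))) : #(univ.filter fun j : Fin r => d (j + 1) < x) = k := by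
  rw [mem_Ioc] at hx
  have : univ.filter (fun j : Fin r => d (j + 1) < x) = univ.filter (fun j : Fin r => j < k) := by
    ext j
    simp only [mem_filter, mem_univ, true_and]
    constructor
    · intro h
      by_contra hc
      have := hd (show k + 1 ≤ j + 1 by omega)
      omega
    · intro h
      have := hd (show (j : ℕ) + 1 ≤ k by omega)
      omega
  rw [this, Fin.card_filter_val_lt]
  omega

lemma monotone_card_filter_lt (d : ℕ → ℕ) :
    Monotone fun x => #(univ.filter fun k : Fin r => d (k + 1) < x) := fun _ _ h =>
  card_le_card fun k => by simp only [mem_filter, mem_univ, true_and]; omega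

lemma lt_iff_lt_of_mem_biUnion_sdiff {Row Red : ℕ → Finset ℕ} {d e ρ : ℕ → ℕ} (hd : Monotone d)
    (hRow : ∀ k, Row k = Ioc (d k) (d (k + 1))) (hRed : ∀ k, Red k = Ioc (d k) (e k))
    (he : ∀ k, e k ≤ d (k + 1)) (hρ : ∀ k ∈ range r, ∀ x ∈ Row k, ρ x = k) {x y : ℕ}
    (hx : x ∈ (range r).biUnion fun k => Row k \ Red k) (hy : y ∈ (range r).biUnion Red) :
    x < y ↔ ρ x < ρ y := by
  obtain ⟨k, hk, hx⟩ := mem_biUnion.1 hx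
  obtain ⟨k', hk', hy⟩ := mem_biUnion.1 hy
  rw [hρ k hk x (sdiff_subset hx),
    hρ k' hk' y (hRow k' ▸ Ioc_subset_Ioc_right (he k') (hRed k' ▸ hy))]
  simp only [hRow, hRed, mem_sdiff, mem_Ioc, not_and, not_le] at hx hy
  rcases lt_trichotomy k k' with h | rfl | h
  · have := hd (show k + 1 ≤ k' by omega)
    omega
  · have := hx.2 hx.1.1
    omega
  · have := hd (show k' + 1 ≤ k by omega)
    have := he k'
    omega

end Composition

lemma sum_sum_biUnion_ite_lt {ι α : Type*} [LinearOrder ι] [DecidableEq α] {s : Finset ι}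
    {A B : ι → Finset α} {ρ : α → ι} (hA : ∀ k ∈ s, ∀ x ∈ A k, ρ x = k)
    (hB : ∀ k ∈ s, ∀ y ∈ B k, ρ y = k) :
    ∑ x ∈ s.biUnion A, ∑ y ∈ s.biUnion B, (if ρ x < ρ y then 1 else 0) =
      ∑ p ∈ (s ×ˢ s).filter (fun p => p.2 < p.1), #(B p.1) * #(A p.2) := by
  have disj {C : ι → Finset α} (hC : ∀ k ∈ s, ∀ x ∈ C k, ρ x = k) :
      (s : Set ι).PairwiseDisjoint C := fun k hk k' hk' hne =>
    disjoint_left.2 fun x hx hx' => hne ((hC k hk x hx).symm.trans (hC k' hk' x hx'))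
  rw [sum_biUnion (disj hA), sum_filter, sum_product, sum_comm]
  refine sum_congr rfl fun k hk => ?_
  calc ∑ x ∈ A k, ∑ y ∈ s.biUnion B, (if ρ x < ρ y then 1 else 0)
      = ∑ x ∈ A k, ∑ k' ∈ s, if k < k' then #(B k') else 0 := by
        refine sum_congr rfl fun x hx => ?_
        rw [sum_biUnion (disj hB)]
        refine sum_congr rfl fun k' hk' => ?_
        rw [sum_congr rfl fun y hy => by rw [hA k hk x hx, hB k' hk' y hy]]
        simp
    _ = _ := by
        rw [sum_const, smul_eq_mul, mul_sum]
        refine sum_congr rfl fun k' _ => ?_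
        split_ifs <;> simp [mul_comm]

lemma sum_sum_ite_lt_add_sum_sum_ite_lt {I J : Finset ℕ} {l m ρ : ℕ → ℕ} (hl : Set.InjOn l I)
    (hm : Set.InjOn m J) (hlm : Disjoint (I.image l) (J.image m))
    (hred : ∀ i ∈ J, ∀ j ∈ I, m i < l j ↔ ρ (m i) < ρ (l j))
    (hblue : ∀ i ∈ J, ∀ j ∈ J, j < i ∧ m i < m j ↔ ρ (m i) < ρ (m j)) :
    ∑ i ∈ J, ∑ j ∈ I, (if m i < l j then 1 else 0) +
        ∑ i ∈ J, ∑ j ∈ J, (if j < i ∧ m i < m j then 1 else 0) =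
      ∑ x ∈ J.image m, ∑ y ∈ I.image l ∪ J.image m, (if ρ x < ρ y then 1 else 0) := by
  simp only [sum_image hm, sum_union hlm, sum_image hl, sum_add_distrib]
  congr 1
  · exact sum_congr rfl fun i hi => sum_congr rfl fun j hj => if_congr (hred i hi j hj) rfl rfl
  · exact sum_congr rfl fun i hi => sum_congr rfl fun j hj => if_congr (hblue i hi j hj) rfl rfl

lemma and_lt_iff_of_iff_lex {P : Prop} {a b : ℕ} {ρ : ℕ → ℕ} (hρ : Monotone ρ)
    (h : P ↔ ρ a < ρ b ∨ (ρ b = ρ a ∧ b < a)) : P ∧ a < b ↔ ρ a < ρ b := by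
  constructor
  · rintro ⟨hP, hab⟩
    rcases h.1 hP with hlt | ⟨_, hba⟩
    · exact hlt
    · omega
  · intro hlt
    exact ⟨h.2 (Or.inl hlt), lt_of_not_ge fun hba => (hρ hba).not_gt hlt⟩

section RowPartition

variable {ι α : Type*} [DecidableEq α] {s : Finset ι} {R A : ι → Finset α}

lemma disjoint_biUnion_biUnion_sdiff {ρ : α → ι} (hρ : ∀ k ∈ s, ∀ x ∈ R k, ρ x = k)
    (hA : ∀ k, A k ⊆ R k) : Disjoint (s.biUnion A) (s.biUnion fun k => R k \ A k) := by
  simp only [disjoint_left, mem_biUnion, mem_sdiff, not_exists, not_and]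
  rintro x ⟨k, hk, hx⟩ k' hk' hx'
  obtain rfl := (hρ k hk x (hA k hx)).symm.trans (hρ k' hk' x hx')
  exact fun h => h hx

lemma biUnion_union_biUnion_sdiff (hA : ∀ k, A k ⊆ R k) :
    s.biUnion A ∪ s.biUnion (fun k => R k \ A k) = s.biUnion R := by
  rw [← biUnion_union]
  simp only [union_sdiff_of_subset (hA _)]

end RowPartition

theorem length_of_kappa_general (n r : ℕ) (lam : Fin r → ℕ)
    (hsum : ∑ i, lam i = n)
    (d : ℕ → ℕ)
    (hd : ∀ k : ℕ, d k = ∑ j ∈ Finset.univ.filter (fun j : Fin r => (j : ℕ) < k), lam j)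
    (Row : ℕ → Finset ℕ) (hRow : ∀ k, Row k = Finset.Ioc (d k) (d (k + 1)))
    (maxprev : ℕ → ℕ)
    (Red : ℕ → Finset ℕ) (hRed : ∀ k, Red k = Finset.Ioc (d k) (d (k + 1) - maxprev k))
    (Blue : ℕ → Finset ℕ) (hBlue : ∀ k, Blue k = Row k \ Red k)
    (s : ℕ) (hs : s = Finset.univ.sup lam)
    (ν : ℕ → ℕ)
    (hν : ∀ i : ℕ, ν i = (Finset.univ.filter (fun j : Fin r => i ≤ lam j)).card)
    (rowOf : ℕ → ℕ)
    (hrowOf : ∀ x : ℕ, rowOf x = (Finset.univ.filter (fun k : Fin r => d ((k : ℕ) + 1) < x)).card)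
    (l : ℕ → ℕ)
    (hlmono : ∀ i j : ℕ, 1 ≤ i → i < j → j ≤ s → l i < l j)
    (hlrange : (Finset.Icc 1 s).image l = (Finset.range r).biUnion Red)
    (m : ℕ → ℕ)
    (hminj : ∀ i ∈ Finset.Icc 1 (n - s), ∀ j ∈ Finset.Icc 1 (n - s), m i = m j → i = j)
    (hmrange : (Finset.Icc 1 (n - s)).image m = (Finset.range r).biUnion Blue)
    (hmorder : ∀ i ∈ Finset.Icc 1 (n - s), ∀ j ∈ Finset.Icc 1 (n - s),
      (i < j ↔ (rowOf (m j) < rowOf (m i) ∨ (rowOf (m i) = rowOf (m j) ∧ m i < m j))))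
    (κ : ℤ → ℤ)
    (hκper : ∀ x : ℤ, κ (x + n) = κ x + n)
    (hκl : ∀ i : ℕ, 1 ≤ i → i ≤ s → κ (l i) = (i : ℤ) - ((ν i : ℤ) - 1) * n)
    (hκm : ∀ i : ℕ, 1 ≤ i → i ≤ n - s → κ (m i) = ((i : ℤ) + s) + n) :
    affLength n κ = (n ^ 2 - ∑ i, (lam i) ^ 2)
      + ∑ p ∈ (Finset.range r ×ˢ Finset.range r).filter (fun p => p.2 < p.1),
          (Row p.1).card * (Blue p.2).card := by
  subst hsum
  obtain rfl : Blue = fun k => Row k \ Red k := funext hBlue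
  have hd_mono : Monotone d := funext hd ▸ monotone_sum_filter_val_lt lam
  have hrow : ∀ k ∈ range r, ∀ x ∈ Row k, rowOf x = k := fun k hk x hx => by
    rw [hrowOf, card_filter_lt_eq_of_mem_Ioc hd_mono (mem_range.1 hk) (hRow k ▸ hx)]
  have hRed_sub (k : ℕ) : Red k ⊆ Row k := hRed k ▸ hRow k ▸ Ioc_subset_Ioc_right (Nat.sub_le _ _)
  have hcover : (Icc 1 s).image l ∪ (Icc 1 (∑ i, lam i - s)).image m = Icc 1 (∑ i, lam i) := by
    rw [hlrange, hmrange, biUnion_union_biUnion_sdiff hRed_sub, funext hRow,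
      biUnion_range_Ioc_eq_Icc hd]
  have hlm : Disjoint ((Icc 1 s).image l) ((Icc 1 (∑ i, lam i - s)).image m) :=
    hlrange ▸ hmrange ▸ disjoint_biUnion_biUnion_sdiff hrow hRed_sub
  have hsle (j : Fin r) : lam j ≤ s := hs ▸ le_sup (mem_univ j)
  have hsn : s ≤ ∑ i, lam i :=
    hs ▸ Finset.sup_le fun j _ => single_le_sum (fun _ _ => Nat.zero_le _) (mem_univ j)
  have hl : StrictMonoOn l (Set.Icc 1 s) := fun i hi j hj hij => hlmono i j hi.1 hij hj.2
  rw [affLength_eq_of_red_blue hsn hκper (antitone_of_eq_card_filter_le hν) hl hminj hlm hcover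
      hκl hκm, sum_sum_Icc_ite_sub_of_eq_card_filter_le hν hsle,
    sum_Icc_eq_sum_of_eq_card_filter_le hν hsle, add_assoc,
    sum_sum_ite_lt_add_sum_sum_ite_lt (hl.injOn.mono (by simp)) hminj hlm
      (fun i hi j hj => lt_iff_lt_of_mem_biUnion_sdiff hd_mono hRow hRed (fun _ => Nat.sub_le _ _)
        hrow (hmrange ▸ mem_image_of_mem m hi) (hlrange ▸ mem_image_of_mem l hj))
      (fun i hi j hj => and_lt_iff_of_iff_lex (funext hrowOf ▸ monotone_card_filter_lt d)
        (hmorder j hj i hi)),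
    hcover, hmrange, ← biUnion_range_Ioc_eq_Icc hd, ← funext hRow,
    sum_sum_biUnion_ite_lt (fun k hk x hx => hrow k hk x (sdiff_subset hx)) hrow,
    sum_mul_sub_add_sub_mul_eq hsle hsn]

/-- the length of the affine permutation κ (given by
∑ t^{νᵢ−1}E_{i,l(i)} + ∑ t⁻¹E_{i+s,m(i)}) equals
2·dim(G/P) + ∑_{k'<k} #Row(k)·#Blue(k'), where 2·dim(G/P) = n² − ∑λᵢ².
Here λ is a composition of n, d its partial sums, Row(k) = (d_k, d_{k+1}] (0-based k),
Red(k) the #S₁(k) smallest entries of Row(k), Blue(k) the rest, ν the conjugate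
partition, s = max λ, l the increasing enumeration of Red, and m the enumeration of
Blue row by row from bottom to top, each row left to right. -/
theorem length_of_kappa (n r : ℕ) (hr : 0 < r) (lam : Fin r → ℕ)
    (hpos : ∀ i, 0 < lam i) (hsum : ∑ i, lam i = n)
    (d : ℕ → ℕ)
    (hd : ∀ k : ℕ, d k = ∑ j ∈ Finset.univ.filter (fun j : Fin r => (j : ℕ) < k), lam j)
    (Row : ℕ → Finset ℕ) (hRow : ∀ k, Row k = Finset.Ioc (d k) (d (k + 1)))
    (maxprev : ℕ → ℕ)
    (hmp : ∀ k : ℕ, maxprev k = (Finset.univ.filter (fun j : Fin r => (j : ℕ) < k)).sup lam)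
    (Red : ℕ → Finset ℕ) (hRed : ∀ k, Red k = Finset.Ioc (d k) (d (k + 1) - maxprev k))
    (Blue : ℕ → Finset ℕ) (hBlue : ∀ k, Blue k = Row k \ Red k)
    (s : ℕ) (hs : s = Finset.univ.sup lam)
    (ν : ℕ → ℕ)
    (hν : ∀ i : ℕ, ν i = (Finset.univ.filter (fun j : Fin r => i ≤ lam j)).card)
    (rowOf : ℕ → ℕ)
    (hrowOf : ∀ x : ℕ, rowOf x = (Finset.univ.filter (fun k : Fin r => d ((k : ℕ) + 1) < x)).card)
    (l : ℕ → ℕ)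
    (hlmono : ∀ i j : ℕ, 1 ≤ i → i < j → j ≤ s → l i < l j)
    (hlrange : (Finset.Icc 1 s).image l = (Finset.range r).biUnion Red)
    (m : ℕ → ℕ)
    (hminj : ∀ i ∈ Finset.Icc 1 (n - s), ∀ j ∈ Finset.Icc 1 (n - s), m i = m j → i = j)
    (hmrange : (Finset.Icc 1 (n - s)).image m = (Finset.range r).biUnion Blue)
    (hmorder : ∀ i ∈ Finset.Icc 1 (n - s), ∀ j ∈ Finset.Icc 1 (n - s),
      (i < j ↔ (rowOf (m j) < rowOf (m i) ∨ (rowOf (m i) = rowOf (m j) ∧ m i < m j))))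
    (κ : ℤ → ℤ)
    (hκper : ∀ x : ℤ, κ (x + n) = κ x + n)
    (hκl : ∀ i : ℕ, 1 ≤ i → i ≤ s → κ (l i) = (i : ℤ) - ((ν i : ℤ) - 1) * n)
    (hκm : ∀ i : ℕ, 1 ≤ i → i ≤ n - s → κ (m i) = ((i : ℤ) + s) + n) :
    affLength n κ = (n ^ 2 - ∑ i, (lam i) ^ 2)
      + ∑ p ∈ (Finset.range r ×ˢ Finset.range r).filter (fun p => p.2 < p.1),
          (Row p.1).card * (Blue p.2).card :=
  length_of_kappa_general n r lam hsum d hd Row hRow maxprev Red hRed Blue hBlue s hs ν hν rowOf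
    hrowOf l hlmono hlrange m hminj hmrange hmorder κ hκper hκl hκm
end

section
/- Let λ = (λ₁,…,λ_r) be a composition of n with r ≥ 2. The quantity ∑_{k'<k} #Row(k)·#Blue(k') (from the length formula for κ) is zero if and only if r = 2, i.e., if and only if the corresponding parabolic P ⊂ SL_n is maximal. Consequently l(κ) = 2·dim(G/P) iff P is maximal. -/
open Finset

/-- The correction term `∑_{k' < k} λ_k · #Blue(k')` in the length formula for `κ`. -/
def kappaCorrection {r : ℕ} (lam : Fin r → ℕ) : ℕ :=
  ∑ p ∈ (univ ×ˢ univ).filter (fun p : Fin r × Fin r => p.2 < p.1),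
    lam p.1 * min (lam p.2) ((univ.filter (fun j : Fin r => j < p.2)).sup lam)

theorem kappaCorrection_fin_two (lam : Fin 2 → ℕ) : kappaCorrection lam = 0 := by
  refine sum_eq_zero fun p hp => ?_
  have hp2 : p.2 = 0 := by simp only [mem_filter] at hp; omega
  have hempty : univ.filter (fun j : Fin 2 => j < p.2) = ∅ := by
    ext j
    simp [hp2]
  simp [hempty]

theorem kappaCorrection_pos {r : ℕ} (hr : 3 ≤ r) {lam : Fin r → ℕ} (hpos : ∀ i, 0 < lam i) :
    0 < kappaCorrection lam := by
  -- With rows indexed from 0, the pair (k, k') = (2, 1) already contributes λ₂ · min(λ₁, λ₀) > 0.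
  let p : Fin r × Fin r := (⟨2, by omega⟩, ⟨1, by omega⟩)
  have hp : p ∈ (univ ×ˢ univ).filter (fun p : Fin r × Fin r => p.2 < p.1) := by
    simp only [mem_filter, mem_product, mem_univ, true_and]
    exact Fin.mk_lt_mk.mpr (by omega)
  have h0 : (⟨0, by omega⟩ : Fin r) ∈ univ.filter (fun j : Fin r => j < p.2) := by
    simp only [mem_filter, mem_univ, true_and]
    exact Fin.mk_lt_mk.mpr (by omega)
  have hterm : 0 < lam p.1 * min (lam p.2) ((univ.filter (fun j : Fin r => j < p.2)).sup lam) :=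
    Nat.mul_pos (hpos _) (lt_min (hpos _) ((hpos _).trans_le (le_sup h0)))
  exact sum_pos' (fun _ _ => Nat.zero_le _) ⟨p, hp, hterm⟩

theorem kappaCorrection_eq_zero_iff {r : ℕ} (hr : 2 ≤ r) {lam : Fin r → ℕ}
    (hpos : ∀ i, 0 < lam i) : kappaCorrection lam = 0 ↔ r = 2 := by
  refine ⟨fun h => ?_, ?_⟩
  · by_contra hne
    exact (kappaCorrection_pos (by omega) hpos).ne' h
  · rintro rfl
    exact kappaCorrection_fin_two lam

theorem kappa_dense_iff_maximal_general (n r : ℕ) (hr : 2 ≤ r) (lam : Fin r → ℕ)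
    (hpos : ∀ i, 0 < lam i) :
    ((∑ p ∈ (Finset.univ ×ˢ Finset.univ).filter (fun p : Fin r × Fin r => p.2 < p.1),
        lam p.1 * min (lam p.2)
          ((Finset.univ.filter (fun j : Fin r => j < p.2)).sup lam)) = 0 ↔ r = 2) ∧
    (((n ^ 2 - ∑ i, (lam i) ^ 2)
        + ∑ p ∈ (Finset.univ ×ˢ Finset.univ).filter (fun p : Fin r × Fin r => p.2 < p.1),
            lam p.1 * min (lam p.2)
              ((Finset.univ.filter (fun j : Fin r => j < p.2)).sup lam))
      = n ^ 2 - ∑ i, (lam i) ^ 2 ↔ r = 2) := by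
  have key : kappaCorrection lam = 0 ↔ r = 2 := kappaCorrection_eq_zero_iff hr hpos
  exact ⟨key, Nat.add_eq_left.trans key⟩

/-- for a composition λ of n with r ≥ 2 parts, the correction term
∑_{k'<k} #Row(k)·#Blue(k') = ∑_{k'<k} λ_k · min(λ_{k'}, max{λⱼ : j < k'}) vanishes iff
r = 2, i.e. iff the parabolic P is maximal; consequently l(κ) = 2·dim(G/P) iff r = 2. -/
theorem kappa_dense_iff_maximal (n r : ℕ) (hr : 2 ≤ r) (lam : Fin r → ℕ)
    (hpos : ∀ i, 0 < lam i) (hsum : ∑ i, lam i = n) :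
    ((∑ p ∈ (Finset.univ ×ˢ Finset.univ).filter (fun p : Fin r × Fin r => p.2 < p.1),
        lam p.1 * min (lam p.2)
          ((Finset.univ.filter (fun j : Fin r => j < p.2)).sup lam)) = 0 ↔ r = 2) ∧
    (((n ^ 2 - ∑ i, (lam i) ^ 2)
        + ∑ p ∈ (Finset.univ ×ˢ Finset.univ).filter (fun p : Fin r × Fin r => p.2 < p.1),
            lam p.1 * min (lam p.2)
              ((Finset.univ.filter (fun j : Fin r => j < p.2)).sup lam))
      = n ^ 2 - ∑ i, (lam i) ^ 2 ↔ r = 2) :=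
  kappa_dense_iff_maximal_general n r hr lam hpos
end

section
/- Let w ∈ S_n be an element of the Weyl group of SL_n, P the parabolic corresponding to the set of simple roots S_P, and Δ_P the sub-root-system generated by S_P. For the case λ = (d₁, d₂−d₁, …, n−d_{r−1}) and w = s_k·w₀^P with k = n − dᵢ for some 1 ≤ i < r (where w₀^P is the longest element of W^P), the set {α ∈ Δ₀⁺ : α ∉ Δ_P, w(α) > 0} consists of exactly one root, namely γ = α_{d_{i−1}+1} + ⋯ + α_{d_{i+1}−1} = ε_{d_{i−1}+1} − ε_{d_{i+1}}. -/
/-!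
Write `d` for the partial sums of `λ`, so that the blocks of `P` are `(d t, d (t+1)]`. The
permutation `w₀^P` maps the block `(d t, d (t+1)]` increasingly onto `(n - d (t+1), n - d t]`,
so for `a < b` it inverts the pair `(a, b)` exactly when `a` and `b` lie in different blocks.
Composing with the adjacent transposition `s_k` restores the order of exactly one inverted pair,
the one with values `(k + 1, k)`; for `k = n - d i` these values are taken at the first entry
`d (i-1) + 1` of block `i - 1` and at the last entry `d (i+1)` of block `i`.
-/

open Finset

theorem Equiv.lt_and_swap_succ_lt_iff {k p q : ℕ} :
    q < p ∧ swap k (k + 1) p < swap k (k + 1) q ↔ p = k + 1 ∧ q = k := by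
  rw [swap_apply_def, swap_apply_def]
  split_ifs <;> omega

section PartialSum

variable {r : ℕ} (lam : Fin r → ℕ)

def partialSum (k : ℕ) : ℕ := ∑ j ∈ univ.filter (fun j : Fin r => (j : ℕ) < k), lam j

theorem partialSum_zero : partialSum lam 0 = 0 := by simp [partialSum]

theorem monotone_partialSum : Monotone (partialSum lam) := fun s t hst =>
  sum_le_sum_of_subset fun j hj => by simp only [mem_filter, mem_univ, true_and] at hj ⊢; omega

theorem partialSum_le_sum (k : ℕ) : partialSum lam k ≤ ∑ j, lam j :=
  sum_le_sum_of_subset (filter_subset _ _)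

theorem partialSum_self : partialSum lam r = ∑ j, lam j := by
  rw [partialSum, filter_true_of_mem fun j _ => j.2]

theorem partialSum_succ {t : ℕ} (ht : t < r) :
    partialSum lam (t + 1) = partialSum lam t + lam ⟨t, ht⟩ := by
  have : univ.filter (fun j : Fin r => (j : ℕ) < t + 1) =
      insert ⟨t, ht⟩ (univ.filter fun j : Fin r => (j : ℕ) < t) := by
    ext j
    simp only [mem_filter, mem_univ, true_and, mem_insert, Fin.ext_iff]
    omega
  rw [partialSum, partialSum, this, sum_insert (by simp), add_comm]

theorem partialSum_lt_succ {lam : Fin r → ℕ} (hpos : ∀ j, 0 < lam j) {t : ℕ} (ht : t < r) :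
    partialSum lam t < partialSum lam (t + 1) := by
  rw [partialSum_succ lam ht]
  exact Nat.lt_add_of_pos_right (hpos _)

end PartialSum

section Blocks

variable {d : ℕ → ℕ} {s t a b x : ℕ}

def InBlock (d : ℕ → ℕ) (t x : ℕ) : Prop := d t < x ∧ x ≤ d (t + 1)

theorem inBlock_add_one (h : d s < d (s + 1)) : InBlock d s (d s + 1) := ⟨by omega, h⟩

theorem inBlock_succ (h : d s < d (s + 1)) : InBlock d s (d (s + 1)) := ⟨h, le_rfl⟩

theorem InBlock.le_of_le (hd : Monotone d) (ha : InBlock d s a) (hb : InBlock d t b)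
    (hab : a ≤ b) : s ≤ t := by
  by_contra h
  have := hd (show t + 1 ≤ s by omega)
  unfold InBlock at ha hb
  omega

theorem InBlock.eq (hd : Monotone d) (hs : InBlock d s x) (ht : InBlock d t x) : s = t :=
  le_antisymm (hs.le_of_le hd ht le_rfl) (ht.le_of_le hd hs le_rfl)

theorem exists_inBlock (h0 : d 0 < x) : ∀ {r : ℕ}, x ≤ d r → ∃ t < r, InBlock d t x
  | 0, h => absurd h (by omega)
  | r + 1, h =>
    if hr : x ≤ d r then (exists_inBlock h0 hr).imp fun _ ht => ⟨by omega, ht.2⟩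
    else ⟨r, by omega, by omega, h⟩

theorem card_filter_eq_of_inBlock {r : ℕ} (hd : Monotone d) (ht : t < r) (hx : InBlock d t x) :
    #{k : Fin r | d (k + 1) < x} = t := by
  have : ({k | d (k + 1) < x} : Finset (Fin r)) = Iio ⟨t, ht⟩ := by
    ext j
    simp only [mem_filter, mem_univ, true_and, mem_Iio, Fin.lt_def]
    unfold InBlock at hx
    constructor
    · intro hj
      by_contra hcon
      have := hd (show t + 1 ≤ (j : ℕ) + 1 by omega)
      omega
    · intro hj
      have := hd (show (j : ℕ) + 1 ≤ t by omega)
      omega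
  rw [this, Fin.card_Iio]

theorem inBlock_card_filter {r : ℕ} (hd : Monotone d) (h0 : d 0 < x) (hr : x ≤ d r) :
    InBlock d #{k : Fin r | d (k + 1) < x} x := by
  obtain ⟨t, ht, hx⟩ := exists_inBlock h0 hr
  rwa [card_filter_eq_of_inBlock hd ht hx]

end Blocks

section BlockReversal

variable {d : ℕ → ℕ} {n s t a b x : ℕ}

/-- The image of `x ∈ (d t, d (t+1)]` under the block reversal `w₀^P`; it lies in
`(n - d (t+1), n - d t]`. -/
def blockReversal (d : ℕ → ℕ) (n t x : ℕ) : ℕ := x - d t + (n - d (t + 1))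

theorem blockReversal_lt_blockReversal_iff (hd : Monotone d) (ha : InBlock d s a)
    (hb : InBlock d t b) (hab : a < b) (hn : d (t + 1) ≤ n) :
    blockReversal d n t b < blockReversal d n s a ↔ s ≠ t := by
  have hst : s ≤ t := ha.le_of_le hd hb hab.le
  have := hd (show s + 1 ≤ t + 1 by omega)
  unfold blockReversal
  unfold InBlock at ha hb
  rcases hst.lt_or_eq with hlt | rfl
  · have := hd (show s + 1 ≤ t by omega)
    simp only [ne_eq, hlt.ne, not_false_eq_true, iff_true]
    omega
  · simp only [ne_eq, not_true_eq_false, iff_false, not_lt]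
    omega

theorem blockReversal_eq_sub_iff (hd : Monotone d) (hx : InBlock d t x) (hs : d s < d (s + 1))
    (hn : d (t + 1) ≤ n) : blockReversal d n t x = n - d s ↔ x = d (s + 1) := by
  have hmono := hd (Nat.le_add_right t 1)
  unfold blockReversal
  constructor
  · intro h
    obtain rfl := (inBlock_add_one hs).eq hd
      (show InBlock d t (d s + 1) by unfold InBlock at hx ⊢; omega)
    unfold InBlock at hx
    omega
  · rintro rfl
    obtain rfl := hx.eq hd (inBlock_succ hs)
    omega

theorem blockReversal_eq_sub_add_one_iff (hd : Monotone d) (hx : InBlock d t x)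
    (hs : d s < d (s + 1)) (hn : d (t + 1) ≤ n) (hsn : d (s + 1) ≤ n) :
    blockReversal d n t x = n - d (s + 1) + 1 ↔ x = d s + 1 := by
  have hmono := hd (Nat.le_add_right t 1)
  unfold blockReversal
  constructor
  · intro h
    obtain rfl := (inBlock_succ hs).eq hd
      (show InBlock d t (d (s + 1)) by unfold InBlock at hx ⊢; omega)
    unfold InBlock at hx
    omega
  · rintro rfl
    obtain rfl := hx.eq hd (inBlock_add_one hs)
    omega

end BlockReversal

theorem schubert_divisor_unique_root_general (n r : ℕ) (lam : Fin r → ℕ)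
    (hpos : ∀ i, 0 < lam i) (hsum : ∑ i, lam i = n)
    (d : ℕ → ℕ)
    (hd : ∀ k : ℕ, d k = ∑ j ∈ Finset.univ.filter (fun j : Fin r => (j : ℕ) < k), lam j)
    (rowOf : ℕ → ℕ)
    (hrowOf : ∀ x : ℕ, rowOf x = (Finset.univ.filter (fun k : Fin r => d ((k : ℕ) + 1) < x)).card)
    (i : ℕ) (hi1 : 1 ≤ i) (hir : i < r) (k : ℕ) (hk : k = n - d i)
    (w0 : ℕ → ℕ)
    (hw0 : ∀ x : ℕ, 1 ≤ x → x ≤ n → w0 x = x - d (rowOf x) + (n - d (rowOf x + 1)))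
    (w : ℕ → ℕ)
    (hw : ∀ x : ℕ, w x = if w0 x = k then k + 1 else if w0 x = k + 1 then k else w0 x) :
    ∀ a b : ℕ, 1 ≤ a → a < b → b ≤ n →
      ((rowOf a ≠ rowOf b ∧ w a < w b) ↔ (a = d (i - 1) + 1 ∧ b = d (i + 1))) := by
  obtain rfl : d = partialSum lam := funext hd
  obtain ⟨j, rfl⟩ : ∃ j, i = j + 1 := ⟨i - 1, by omega⟩
  have hmono := monotone_partialSum lam
  have hn : ∀ t, partialSum lam t ≤ n := hsum ▸ partialSum_le_sum lam
  have hblock : ∀ x, 1 ≤ x → x ≤ n → InBlock (partialSum lam) (rowOf x) x :=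
    fun x h1 h2 =>
      hrowOf x ▸ inBlock_card_filter hmono (by rw [partialSum_zero]; omega)
        (by rwa [partialSum_self, hsum])
  intro a b ha hab hb
  have hblock_a := hblock a ha (by omega)
  have hblock_b := hblock b (by omega) hb
  rw [hw, hw, ← Equiv.swap_apply_def, ← Equiv.swap_apply_def, hw0 a ha (by omega),
    hw0 b (by omega) hb, ← blockReversal, ← blockReversal,
    ← blockReversal_lt_blockReversal_iff hmono hblock_a hblock_b hab (hn _),
    Equiv.lt_and_swap_succ_lt_iff, hk,
    blockReversal_eq_sub_add_one_iff hmono hblock_a (partialSum_lt_succ hpos (by omega)) (hn _)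
      (hn _),
    blockReversal_eq_sub_iff hmono hblock_b (partialSum_lt_succ hpos hir) (hn _),
    Nat.add_sub_cancel]

/-- for the parabolic P of SL_n given by the composition
λ = (d₁, d₂−d₁, …, n−d_{r−1}) and w = s_k·w₀^P with k = n − dᵢ (1 ≤ i < r), the set
{α ∈ Δ₀⁺ : α ∉ Δ_P, w(α) > 0} = {ε_{d_{i−1}+1} − ε_{d_{i+1}}}.  Roots are encoded as
pairs (a,b) with 1 ≤ a < b ≤ n; α = (a,b) ∈ Δ_P iff a, b lie in the same block, and
w(α) > 0 iff w(a) < w(b). -/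
theorem schubert_divisor_unique_root (n r : ℕ) (hr : 0 < r) (lam : Fin r → ℕ)
    (hpos : ∀ i, 0 < lam i) (hsum : ∑ i, lam i = n)
    (d : ℕ → ℕ)
    (hd : ∀ k : ℕ, d k = ∑ j ∈ Finset.univ.filter (fun j : Fin r => (j : ℕ) < k), lam j)
    (rowOf : ℕ → ℕ)
    (hrowOf : ∀ x : ℕ, rowOf x = (Finset.univ.filter (fun k : Fin r => d ((k : ℕ) + 1) < x)).card)
    (i : ℕ) (hi1 : 1 ≤ i) (hir : i < r) (k : ℕ) (hk : k = n - d i)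
    (w0 : ℕ → ℕ)
    (hw0 : ∀ x : ℕ, 1 ≤ x → x ≤ n → w0 x = x - d (rowOf x) + (n - d (rowOf x + 1)))
    (w : ℕ → ℕ)
    (hw : ∀ x : ℕ, w x = if w0 x = k then k + 1 else if w0 x = k + 1 then k else w0 x) :
    ∀ a b : ℕ, 1 ≤ a → a < b → b ≤ n →
      ((rowOf a ≠ rowOf b ∧ w a < w b) ↔ (a = d (i - 1) + 1 ∧ b = d (i + 1))) :=
  schubert_divisor_unique_root_general n r lam hpos hsum d hd rowOf hrowOf i hi1 hir k hk w0 hw0 w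
    hw
end

section
/- For 1 ≤ k < n, let v_k be the affine permutation of type Â_{n−1} with matrix ∑_{i=1}^n aᵢE_{i,n+1−i} where a_k = t⁻¹, a_{k+1} = t, and aᵢ = 1 otherwise. Then the Coxeter length of v_k equals n(n−1)/2 = dim(SL_n/B). -/
open Finset

/-- Auxiliary bijection sending a pair `⟨j, i⟩` (encoding the inversion
`(i+1, j+1)` of the longest element `w₀`) to the corresponding inversion
of the affine permutation `v_k`. -/
def phiAux (n k : ℕ) (u : (_ : ℕ) × ℕ) : ℤ × ℤ :=
  if (u.2 : ℤ) + 1 = (n : ℤ) - k ∧ (u.1 : ℤ) + 1 = (n : ℤ) - k + 1 then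
    ((n : ℤ) - k + 1, (n : ℤ) - k + n)
  else if (u.2 : ℤ) + 1 = (n : ℤ) - k then ((n : ℤ) - k + 1, (u.1 : ℤ) + 1 + n)
  else if (u.1 : ℤ) + 1 = (n : ℤ) - k + 1 then ((u.2 : ℤ) + 1, (n : ℤ) - k + n)
  else ((u.2 : ℤ) + 1, (u.1 : ℤ) + 1)

/-- for 1 ≤ k < n, the affine permutation v_k with matrix
∑ aᵢE_{i,n+1−i}, where a_k = t⁻¹, a_{k+1} = t and aᵢ = 1 otherwise, has Coxeter
length n(n−1)/2 = dim(SL_n/B).  On 1 ≤ j ≤ n, v_k(j) = n+1−j, except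
v_k(n+1−k) = k+n and v_k(n−k) = k+1−n. -/
theorem length_of_vk (n k : ℕ) (hk1 : 1 ≤ k) (hkn : k < n)
    (v : ℤ → ℤ) (hper : ∀ i : ℤ, v (i + n) = v i + n)
    (hv : ∀ j : ℤ, 1 ≤ j → j ≤ (n : ℤ) →
      v j = ((n : ℤ) + 1 - j) + (if j = (n : ℤ) + 1 - k then (n : ℤ) else 0)
        - (if j = (n : ℤ) - k then (n : ℤ) else 0)) :
    affLength n v = n * (n - 1) / 2 := by
  have hn2 : 2 ≤ n := by omega
  -- periodicity restated
  have hper' : ∀ j : ℤ, v j = v (j - n) + n := by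
    intro j
    have := hper (j - n)
    rw [sub_add_cancel] at this
    omega
  -- value facts
  have hvupper : ∀ x : ℤ, 1 ≤ x → x ≤ (n : ℤ) → v x ≤ (k : ℤ) + n := by
    intro x h1 h2
    have := hv x h1 h2
    split_ifs at this <;> omega
  have hvlower : ∀ x : ℤ, 1 ≤ x → x ≤ (n : ℤ) → (k : ℤ) + 1 - n ≤ v x := by
    intro x h1 h2
    have := hv x h1 h2
    split_ifs at this <;> omega
  have vlow : ∀ j : ℤ, (n : ℤ) < j → j ≤ 2 * n → (k : ℤ) + 1 ≤ v j := by
    intro j h1 h2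
    have h3 := hper' j
    have h4 := hvlower (j - n) (by omega) (by omega)
    omega
  have vbig' : ∀ m : ℕ, ∀ j : ℤ, 2 * n < j → j ≤ 2 * n + m → (k : ℤ) + n < v j := by
    intro m
    induction m with
    | zero => intro j h1 h2; omega
    | succ m ih =>
      intro j h1 h2
      have h3 := hper' j
      by_cases hc : j - n ≤ 2 * n
      · have := vlow (j - n) (by omega) hc
        omega
      · have := ih (j - n) (by omega) (by omega)
        omega
  have vbig : ∀ j : ℤ, 2 * n < j → (k : ℤ) + n < v j := by
    intro j hj
    exact vbig' (j - 2 * n).toNat j hj (by omega)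
  -- the finite set of inversions
  set T : Finset (ℤ × ℤ) :=
    ((Icc (1 : ℤ) n) ×ˢ (Icc (1 : ℤ) (2 * n))).filter
      (fun p => p.1 < p.2 ∧ v p.2 < v p.1) with hT
  have hset : {p : ℤ × ℤ | 1 ≤ p.1 ∧ p.1 ≤ (n : ℤ) ∧ p.1 < p.2 ∧ v p.2 < v p.1}
      = (T : Set (ℤ × ℤ)) := by
    ext ⟨x, y⟩
    simp only [Set.mem_setOf_eq, hT, coe_filter, mem_product, mem_Icc, Set.mem_setOf_eq]
    constructor
    · rintro ⟨h1, h2, h3, h4⟩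
      refine ⟨⟨⟨h1, h2⟩, by omega, ?_⟩, h3, h4⟩
      by_contra h
      push_neg at h
      have := vbig y (by omega)
      have := hvupper x h1 h2
      omega
    · rintro ⟨⟨⟨h1, h2⟩, _, _⟩, h3, h4⟩
      exact ⟨h1, h2, h3, h4⟩
  have hcard : affLength n v = T.card :=
    calc affLength n v
        = Set.ncard {p : ℤ × ℤ | 1 ≤ p.1 ∧ p.1 ≤ (n : ℤ) ∧ p.1 < p.2 ∧ v p.2 < v p.1} :=
          Nat.card_coe_set_eq _
      _ = T.card := by rw [hset, Set.ncard_coe_finset]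
  rw [hcard]
  -- bijection with the inversions of w₀
  have hU : ((range n).sigma fun j => range j).card = n * (n - 1) / 2 := by
    rw [Finset.card_sigma]; simp [Finset.sum_range_id]
  rw [← hU]
  symm
  apply Finset.card_bij (fun u _ => phiAux n k u)
  · -- maps into T
    rintro ⟨j, i⟩ hu
    simp only [mem_sigma, mem_range] at hu
    obtain ⟨hjn, hij⟩ := hu
    have hvA : v ((n : ℤ) - k) = (k : ℤ) + 1 - n := by
      have := hv ((n : ℤ) - k) (by omega) (by omega)
      split_ifs at this <;> omega
    have hvB : v ((n : ℤ) - k + 1) = (k : ℤ) + n := by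
      have := hv ((n : ℤ) - k + 1) (by omega) (by omega)
      split_ifs at this <;> omega
    have hvAn : v ((n : ℤ) - k + n) = (k : ℤ) + 1 := by
      have := hper ((n : ℤ) - k)
      omega
    simp only [phiAux]
    split_ifs with h1 h2 h3 <;>
      simp only [hT, mem_filter, mem_product, mem_Icc]
    · refine ⟨⟨⟨by omega, by omega⟩, by omega, by omega⟩, by omega, by omega⟩
    · -- (B, J+n) with J > B
      have hJ : (n : ℤ) - k + 1 < (j : ℤ) + 1 := by omega
      have hvJ : v ((j : ℤ) + 1) = (n : ℤ) + 1 - ((j : ℤ) + 1) := by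
        have := hv ((j : ℤ) + 1) (by omega) (by omega)
        split_ifs at this <;> omega
      have hvJn : v ((j : ℤ) + 1 + n) = (n : ℤ) + 1 - ((j : ℤ) + 1) + n := by
        have := hper ((j : ℤ) + 1)
        omega
      refine ⟨⟨⟨by omega, by omega⟩, by omega, by omega⟩, by omega, by omega⟩
    · -- (I, A+n) with I < A
      have hI : (i : ℤ) + 1 < (n : ℤ) - k := by omega
      have hvI : v ((i : ℤ) + 1) = (n : ℤ) + 1 - ((i : ℤ) + 1) := by
        have := hv ((i : ℤ) + 1) (by omega) (by omega)
        split_ifs at this <;> omega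
      refine ⟨⟨⟨by omega, by omega⟩, by omega, by omega⟩, by omega, by omega⟩
    · -- generic box pair
      have hvI := hv ((i : ℤ) + 1) (by omega) (by omega)
      have hvJ := hv ((j : ℤ) + 1) (by omega) (by omega)
      refine ⟨⟨⟨by omega, by omega⟩, by omega, by omega⟩, by omega, ?_⟩
      split_ifs at hvI hvJ <;> omega
  · -- injective
    rintro ⟨j1, i1⟩ h1 ⟨j2, i2⟩ h2 heq
    simp only [mem_sigma, mem_range] at h1 h2
    simp only [phiAux] at heq
    split_ifs at heq <;>
      (rw [Prod.mk.injEq] at heq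
       obtain ⟨e1, e2⟩ := heq
       have hj : j1 = j2 := by omega
       have hi : i1 = i2 := by omega
       subst hj; subst hi; rfl)
  · -- surjective
    rintro ⟨x, y⟩ hp
    simp only [hT, mem_filter, mem_product, mem_Icc] at hp
    obtain ⟨⟨⟨hx1, hx2⟩, hy1, hy2⟩, hxy, hinv⟩ := hp
    have hvx := hv x hx1 hx2
    by_cases hyn : y ≤ (n : ℤ)
    · -- box inversion
      have hvy := hv y (by omega) hyn
      have hxA : x ≠ (n : ℤ) - k := by
        intro h
        split_ifs at hvx hvy <;> omega
      have hyB : y ≠ (n : ℤ) + 1 - k := by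
        intro h
        split_ifs at hvx hvy <;> omega
      refine ⟨⟨(y - 1).toNat, (x - 1).toNat⟩, ?_, ?_⟩
      · simp only [mem_sigma, mem_range]; omega
      · simp only [phiAux]
        rw [if_neg (by omega), if_neg (by omega), if_neg (by omega), Prod.mk.injEq]
        omega
    · -- y in (n, 2n]
      push_neg at hyn
      have hvy' := hv (y - n) (by omega) (by omega)
      have hpy := hper' y
      have htri : ((x = (n : ℤ) + 1 - k ∧ y - n = (n : ℤ) - k) ∨
          (x < (n : ℤ) - k ∧ y - n = (n : ℤ) - k) ∨
          (x = (n : ℤ) + 1 - k ∧ (n : ℤ) + 1 - k < y - n)) := by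
        split_ifs at hvx hvy' <;> omega
      rcases htri with ⟨hx, hy⟩ | ⟨hx, hy⟩ | ⟨hx, hy⟩
      · refine ⟨⟨n - k, n - k - 1⟩, ?_, ?_⟩
        · simp only [mem_sigma, mem_range]; omega
        · simp only [phiAux]
          rw [if_pos (by constructor <;> omega), Prod.mk.injEq]
          omega
      · refine ⟨⟨n - k, (x - 1).toNat⟩, ?_, ?_⟩
        · simp only [mem_sigma, mem_range]; omega
        · simp only [phiAux]
          rw [if_neg (by omega), if_neg (by omega), if_pos (by omega), Prod.mk.injEq]
          omega
      · refine ⟨⟨(y - n - 1).toNat, n - k - 1⟩, ?_, ?_⟩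
        · simp only [mem_sigma, mem_range]; omega
        · simp only [phiAux]
          rw [if_neg (by omega), if_pos (by omega), Prod.mk.injEq]
          omega
end
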